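/- arXiv:2010.00861 — 11 statements merged into one kernel-verified Lean document; each statement's English description precedes it below -/
import Mathlib

section
/- Suppose the basic offspring number satisfies R ≤ 1 and there are no sterile males (M_T = 0). Then the only nonnegative equilibrium of the SIT vector field is the origin: if A, M, F ≥ 0 satisfy φF = (γ+μ_{A,1}+μ_{A,2}A)A, (1−r)γA = μ_M M, and rγA = μ_F F, then A = M = F = 0. -/
/-! At a positive equilibrium the larval and female equations combine to
`rγφ = μF (γ + μA1 + μA2 A)`, which exceeds `μF (γ + μA1)` because of the density-dependent
larval mortality `μA2 A`; this contradicts `R ≤ 1`. -/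

theorem eq_zero_of_mul_eq_add_mul_mul {a b c x : ℝ} (hc : 0 < c) (hx : 0 ≤ x) (hab : a ≤ b)
    (h : a * x = (b + c * x) * x) : x = 0 := by
  have hsq : c * x ^ 2 = 0 := by nlinarith [mul_nonneg (sub_nonneg.mpr hab) hx]
  simpa [hc.ne'] using hsq

theorem stmt_0_general (φ γ μA1 μA2 μF μM r : ℝ)
    (hγ : 0 < γ) (hμA1 : 0 < μA1) (hμA2 : 0 < μA2)
    (hμF : 0 < μF) (hμM : 0 < μM)
    (hR : r * γ * φ / (μF * (γ + μA1)) ≤ 1)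
    (A M F : ℝ) (hA : 0 ≤ A)
    (e1 : φ * F = (γ + μA1 + μA2 * A) * A)
    (e2 : (1 - r) * γ * A = μM * M)
    (e3 : r * γ * A = μF * F) :
    A = 0 ∧ M = 0 ∧ F = 0 := by
  have hRle : r * γ * φ ≤ μF * (γ + μA1) := (div_le_one (by positivity)).mp hR
  have hA0 : A = 0 := by
    refine eq_zero_of_mul_eq_add_mul_mul (mul_pos hμF hμA2) hA hRle ?_
    linear_combination φ * e3 + μF * e1
  subst hA0
  refine ⟨rfl, ?_, ?_⟩
  · simpa [hμM.ne'] using e2.symm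
  · simpa [hμF.ne'] using e3.symm

/-- If the basic offspring number `R ≤ 1` and there are no sterile males (`M_T = 0`),
then the only nonnegative equilibrium of the SIT vector field is the origin. -/
theorem stmt_0 (φ γ μA1 μA2 μF μM r : ℝ)
    (hφ : 0 < φ) (hγ : 0 < γ) (hμA1 : 0 < μA1) (hμA2 : 0 < μA2)
    (hμF : 0 < μF) (hμM : 0 < μM) (hr0 : 0 < r) (hr1 : r < 1)
    (hR : r * γ * φ / (μF * (γ + μA1)) ≤ 1)
    (A M F : ℝ) (hA : 0 ≤ A) (hM : 0 ≤ M) (hF : 0 ≤ F)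
    (e1 : φ * F = (γ + μA1 + μA2 * A) * A)
    (e2 : (1 - r) * γ * A = μM * M)
    (e3 : r * γ * A = μF * F) :
    A = 0 ∧ M = 0 ∧ F = 0 :=
  stmt_0_general φ γ μA1 μA2 μF μM r hγ hμA1 hμA2 hμF hμM hR A M F hA e1 e2 e3
end

section
/- Suppose the basic offspring number satisfies R > 1 and M_T = 0. Then the SIT vector field has exactly one equilibrium with all components positive, namely E* = (A*, M*, F*) with A* = (γ+μ_{A,1})(R−1)/μ_{A,2}, M* = (1−r)γA*/μ_M, F* = rγA*/μ_F: this triple satisfies φF* = (γ+μ_{A,1}+μ_{A,2}A*)A*, (1−r)γA* = μ_M M*, rγA* = μ_F F*, and any triple (A,M,F) with A,M,F > 0 satisfying these three equations equals (A*,M*,F*). -/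
/-!
Eliminating `M` and `F` through the two linear equations turns the first one into
`(rγφ/μ_F) A = (γ + μ_{A,1} + μ_{A,2} A) A`. Dividing by `A ≠ 0` leaves a linear equation for `A`,
whose only solution `(rγφ/μ_F − (γ + μ_{A,1}))/μ_{A,2} = (γ + μ_{A,1})(R − 1)/μ_{A,2}` is positive
exactly when `R > 1`.
-/

lemma logistic_balance_iff {k b a A : ℝ} (ha : a ≠ 0) (hA : A ≠ 0) :
    k * A = (b + a * A) * A ↔ A = (k - b) / a := by
  rw [mul_left_inj' hA, eq_div_iff ha]
  constructor <;> intro h <;> linarith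

lemma sit_equilibrium_iff {φ γ μA1 μA2 μF μM r A M F : ℝ}
    (hμA2 : μA2 ≠ 0) (hμF : μF ≠ 0) (hμM : μM ≠ 0) (hA : A ≠ 0) :
    (φ * F = (γ + μA1 + μA2 * A) * A ∧ (1 - r) * γ * A = μM * M ∧ r * γ * A = μF * F) ↔
      A = (r * γ * φ / μF - (γ + μA1)) / μA2 ∧
        M = (1 - r) * γ * A / μM ∧ F = r * γ * A / μF := by
  have hMiff : (1 - r) * γ * A = μM * M ↔ M = (1 - r) * γ * A / μM := by
    rw [eq_div_iff hμM, mul_comm M, eq_comm]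
  have hFiff : r * γ * A = μF * F ↔ F = r * γ * A / μF := by
    rw [eq_div_iff hμF, mul_comm F, eq_comm]
  rw [hMiff, hFiff, ← logistic_balance_iff hμA2 hA]
  refine and_congr_left fun ⟨_, hF⟩ => ?_
  rw [hF]
  ring_nf

theorem stmt_1_general (φ γ μA1 μA2 μF μM r : ℝ)
    (hγ : 0 < γ) (hμA1 : 0 < μA1) (hμA2 : 0 < μA2)
    (hμF : 0 < μF) (hμM : 0 < μM) (hr0 : 0 < r) (hr1 : r < 1)
    (R : ℝ) (hRdef : R = r * γ * φ / (μF * (γ + μA1))) (hR : 1 < R)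
    (Astar Mstar Fstar : ℝ)
    (hAs : Astar = (γ + μA1) * (R - 1) / μA2)
    (hMs : Mstar = (1 - r) * γ * Astar / μM)
    (hFs : Fstar = r * γ * Astar / μF) :
    (0 < Astar ∧ 0 < Mstar ∧ 0 < Fstar) ∧
    (φ * Fstar = (γ + μA1 + μA2 * Astar) * Astar ∧
      (1 - r) * γ * Astar = μM * Mstar ∧
      r * γ * Astar = μF * Fstar) ∧
    (∀ A M F : ℝ, 0 < A → 0 < M → 0 < F →
      φ * F = (γ + μA1 + μA2 * A) * A →
      (1 - r) * γ * A = μM * M →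
      r * γ * A = μF * F →
      A = Astar ∧ M = Mstar ∧ F = Fstar) := by
  have hb : 0 < γ + μA1 := by positivity
  have hA : 0 < Astar := by
    rw [hAs]
    exact div_pos (mul_pos hb (by linarith)) hμA2
  have hAs' : Astar = (r * γ * φ / μF - (γ + μA1)) / μA2 := by
    rw [hAs, hRdef]
    field_simp
  have hM : 0 < Mstar := by
    rw [hMs]
    exact div_pos (mul_pos (mul_pos (by linarith) hγ) hA) hμM
  have hF : 0 < Fstar := by
    rw [hFs]
    positivity
  refine ⟨⟨hA, hM, hF⟩,
    (sit_equilibrium_iff hμA2.ne' hμF.ne' hμM.ne' hA.ne').2 ⟨hAs', hMs, hFs⟩, ?_⟩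
  intro A M F hA₀ _ _ h₁ h₂ h₃
  obtain ⟨hAeq, rfl, rfl⟩ :=
    (sit_equilibrium_iff hμA2.ne' hμF.ne' hμM.ne' hA₀.ne').1 ⟨h₁, h₂, h₃⟩
  rw [← hAs'] at hAeq
  subst hAeq
  exact ⟨rfl, hMs.symm, hFs.symm⟩

/-- If `R > 1` and `M_T = 0`, the SIT vector field has exactly one positive equilibrium,
namely `E* = (A*, M*, F*)`. -/
theorem stmt_1 (φ γ μA1 μA2 μF μM r : ℝ)
    (hφ : 0 < φ) (hγ : 0 < γ) (hμA1 : 0 < μA1) (hμA2 : 0 < μA2)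
    (hμF : 0 < μF) (hμM : 0 < μM) (hr0 : 0 < r) (hr1 : r < 1)
    (R : ℝ) (hRdef : R = r * γ * φ / (μF * (γ + μA1))) (hR : 1 < R)
    (Astar Mstar Fstar : ℝ)
    (hAs : Astar = (γ + μA1) * (R - 1) / μA2)
    (hMs : Mstar = (1 - r) * γ * Astar / μM)
    (hFs : Fstar = r * γ * Astar / μF) :
    (0 < Astar ∧ 0 < Mstar ∧ 0 < Fstar) ∧
    (φ * Fstar = (γ + μA1 + μA2 * Astar) * Astar ∧
      (1 - r) * γ * Astar = μM * Mstar ∧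
      r * γ * Astar = μF * Fstar) ∧
    (∀ A M F : ℝ, 0 < A → 0 < M → 0 < F →
      φ * F = (γ + μA1 + μA2 * A) * A →
      (1 - r) * γ * A = μM * M →
      r * γ * A = μF * F →
      A = Astar ∧ M = Mstar ∧ F = Fstar) :=
  stmt_1_general φ γ μA1 μA2 μF μM r hγ hμA1 hμA2 hμF hμM hr0 hr1 R hRdef hR Astar Mstar Fstar hAs
    hMs hFs
end

section
/- Assume R > 1 and 0 < M_T < M_{T1}. Then Δ(M_T) > 0, the numbers α_± = ((R−1−Q·M_T) ± √Δ(M_T))/2 satisfy 0 < α_− < α_+, and the two triples E_1 = (A_1,M_1,F_1) and E_2 = (A_2,M_2,F_2) defined by M_1 = M_T/α_+, M_2 = M_T/α_−, A_i = μ_M M_i/((1−r)γ), F_i = (γ+μ_{A,1}+μ_{A,2}A_i)A_i/φ are equilibria of the SIT vector field H_{M_T} with 0 < A_1 < A_2, 0 < M_1 < M_2, and 0 < F_1 < F_2. -/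
/-!
At an equilibrium with `M > 0`, the first two components of `H_{M_T}` fix `A` and `F` in terms of
`M`. Since `μ_{A,2} A = Q (γ + μ_{A,1}) M`, the third component then reduces to the balance law
`R M = (M + M_T)(1 + Q M)`, and the substitution `M = M_T / α` turns it into
`α² − (R − 1 − Q M_T) α + Q M_T = 0`, whose discriminant is `Δ(M_T)`. Below `M_{T1}` both factors of
`Δ(M_T)` are positive and `R − 1 − Q M_T > 0`, so the two roots `α_±` are positive and distinct;
since `A` and `F` increase with `M`, the order `α_− < α_+` gives `E₁ < E₂`.
-/

lemma sq_sqrt_sub_one_lt_sub_one {R : ℝ} (hR : 1 < R) : (√R - 1) ^ 2 < R - 1 := by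
  have hsR : √R ^ 2 = R := Real.sq_sqrt (by linarith)
  have h1 : 1 < √R := Real.lt_sqrt_of_sq_lt (by linarith)
  nlinarith

lemma sqrt_sub_one_sq_mul_sqrt_add_one_sq {R : ℝ} (hR : 0 ≤ R) (s : ℝ) :
    ((√R - 1) ^ 2 - s) * ((√R + 1) ^ 2 - s) = (R - 1 - s) ^ 2 - 4 * s := by
  have hsR : √R ^ 2 = R := Real.sq_sqrt hR
  linear_combination (√R ^ 2 + R - 2 - 2 * s) * hsR

lemma sqrt_sub_one_sq_sub_mul_sqrt_add_one_sq_sub_pos {R s : ℝ} (hs : s < (√R - 1) ^ 2) :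
    0 < ((√R - 1) ^ 2 - s) * ((√R + 1) ^ 2 - s) := by
  have hle : (√R - 1) ^ 2 ≤ (√R + 1) ^ 2 := by nlinarith [Real.sqrt_nonneg R]
  exact mul_pos (sub_pos.mpr hs) (sub_pos.mpr (hs.trans_le hle))

lemma quadratic_roots_pos {b c D : ℝ} (hb : 0 < b) (hc : 0 < c) (hD : D = b ^ 2 - 4 * c)
    (hDpos : 0 < D) : 0 < (b - √D) / 2 ∧ (b - √D) / 2 < (b + √D) / 2 := by
  have hsqrt_lt : √D < b := (Real.sqrt_lt' hb).mpr (by linarith)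
  have hsqrt_pos : 0 < √D := Real.sqrt_pos.mpr hDpos
  constructor <;> linarith

lemma quadratic_root_of_sq_eq {b c d x : ℝ} (hd : d ^ 2 = b ^ 2 - 4 * c) (hx : x = (b + d) / 2) :
    x ^ 2 - b * x + c = 0 := by
  rw [hx]; linear_combination hd / 4

lemma affine_mul_div_lt_affine_mul_div {c d φ x y : ℝ} (hc : 0 < c) (hd : 0 ≤ d) (hφ : 0 < φ)
    (hx : 0 ≤ x) (hxy : x < y) : (c + d * x) * x / φ < (c + d * y) * y / φ := by
  apply div_lt_div_of_pos_right _ hφ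
  nlinarith [mul_le_mul_of_nonneg_left hxy.le hd]

def IsSITEquilibrium (φ γ μA1 μA2 μF μM r MT A M F : ℝ) : Prop :=
  φ * F - (γ + μA1 + μA2 * A) * A = 0 ∧
    (1 - r) * γ * A - μM * M = 0 ∧
    (M / (M + MT)) * r * γ * A - μF * F = 0

section SIT

variable {φ γ μA1 μA2 μF μM r R Q MT α A M F : ℝ}

lemma sit_female_eq_of_balance (hφ : φ ≠ 0) (hγ : γ ≠ 0) (hc : γ + μA1 ≠ 0) (hμF : μF ≠ 0)
    (hr : 1 - r ≠ 0) (hMMT : M + MT ≠ 0)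
    (hRdef : R = r * γ * φ / (μF * (γ + μA1)))
    (hQdef : Q = μA2 * μM / ((γ + μA1) * (1 - r) * γ))
    (hA : A = μM * M / ((1 - r) * γ)) (hF : F = (γ + μA1 + μA2 * A) * A / φ)
    (hbal : R * M = (M + MT) * (1 + Q * M)) :
    (M / (M + MT)) * r * γ * A - μF * F = 0 := by
  subst hRdef hQdef hA hF
  field_simp at hbal ⊢
  linear_combination M * μM * hbal

lemma sit_balance_of_root (hα : α ≠ 0) (hM : α * M = MT)
    (hroot : α ^ 2 - (R - 1 - Q * MT) * α + Q * MT = 0) :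
    R * M = (M + MT) * (1 + Q * M) := by
  have hfactor : α * ((1 + α) * (1 + Q * M) - R) = 0 := by
    rw [← hM] at hroot; linear_combination hroot
  have hR : (1 + α) * (1 + Q * M) = R := by
    linear_combination (mul_eq_zero.mp hfactor).resolve_left hα
  rw [← hR, ← hM]; ring

lemma isSITEquilibrium_of_root (hφ : 0 < φ) (hγ : 0 < γ) (hμA1 : 0 < μA1) (hμF : 0 < μF)
    (hr1 : r < 1) (hMT : 0 < MT) (hα : 0 < α)
    (hRdef : R = r * γ * φ / (μF * (γ + μA1)))
    (hQdef : Q = μA2 * μM / ((γ + μA1) * (1 - r) * γ))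
    (hroot : α ^ 2 - (R - 1 - Q * MT) * α + Q * MT = 0) (hM : M = MT / α)
    (hA : A = μM * M / ((1 - r) * γ)) (hF : F = (γ + μA1 + μA2 * A) * A / φ) :
    IsSITEquilibrium φ γ μA1 μA2 μF μM r MT A M F := by
  have hr : 1 - r ≠ 0 := by linarith
  refine ⟨?_, ?_, ?_⟩
  · rw [hF]; field_simp; ring
  · rw [hA]; field_simp; ring
  · have hαM : α * M = MT := by rw [hM]; field_simp
    have hMMT : M + MT ≠ 0 := by rw [hM]; positivity
    exact sit_female_eq_of_balance hφ.ne' hγ.ne' (by positivity) hμF.ne' hr hMMT hRdef hQdef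
      hA hF (sit_balance_of_root hα.ne' hαM hroot)

end SIT

theorem stmt_2_general (φ γ μA1 μA2 μF μM r : ℝ)
    (hφ : 0 < φ) (hγ : 0 < γ) (hμA1 : 0 < μA1) (hμA2 : 0 < μA2)
    (hμF : 0 < μF) (hμM : 0 < μM) (hr1 : r < 1)
    (R Q MT1 MT Δ αp αm M1 M2 A1 A2 F1 F2 : ℝ)
    (hRdef : R = r * γ * φ / (μF * (γ + μA1))) (hR : 1 < R)
    (hQ : Q = μA2 * μM / ((γ + μA1) * (1 - r) * γ))
    (hMT1 : MT1 = (Real.sqrt R - 1) ^ 2 / Q)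
    (hMT0 : 0 < MT) (hMTlt : MT < MT1)
    (hΔ : Δ = ((Real.sqrt R - 1) ^ 2 - Q * MT) * ((Real.sqrt R + 1) ^ 2 - Q * MT))
    (hαp : αp = ((R - 1 - Q * MT) + Real.sqrt Δ) / 2)
    (hαm : αm = ((R - 1 - Q * MT) - Real.sqrt Δ) / 2)
    (hM1 : M1 = MT / αp) (hM2 : M2 = MT / αm)
    (hA1 : A1 = μM * M1 / ((1 - r) * γ)) (hA2 : A2 = μM * M2 / ((1 - r) * γ))
    (hF1 : F1 = (γ + μA1 + μA2 * A1) * A1 / φ)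
    (hF2 : F2 = (γ + μA1 + μA2 * A2) * A2 / φ) :
    0 < Δ ∧ 0 < αm ∧ αm < αp ∧
    (φ * F1 - (γ + μA1 + μA2 * A1) * A1 = 0 ∧
      (1 - r) * γ * A1 - μM * M1 = 0 ∧
      (M1 / (M1 + MT)) * r * γ * A1 - μF * F1 = 0) ∧
    (φ * F2 - (γ + μA1 + μA2 * A2) * A2 = 0 ∧
      (1 - r) * γ * A2 - μM * M2 = 0 ∧
      (M2 / (M2 + MT)) * r * γ * A2 - μF * F2 = 0) ∧
    (0 < A1 ∧ A1 < A2 ∧ 0 < M1 ∧ M1 < M2 ∧ 0 < F1 ∧ F1 < F2) := by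
  have hr : 0 < 1 - r := by linarith
  have hQpos : 0 < Q := by rw [hQ]; positivity
  have hs : 0 < Q * MT := mul_pos hQpos hMT0
  have hsR : Q * MT < (√R - 1) ^ 2 := by rw [hMT1, lt_div_iff₀ hQpos] at hMTlt; linarith
  have hb : 0 < R - 1 - Q * MT := by linarith [sq_sqrt_sub_one_lt_sub_one hR]
  have hΔpos : 0 < Δ := hΔ ▸ sqrt_sub_one_sq_sub_mul_sqrt_add_one_sq_sub_pos hsR
  have hΔeq : Δ = (R - 1 - Q * MT) ^ 2 - 4 * (Q * MT) :=
    hΔ.trans (sqrt_sub_one_sq_mul_sqrt_add_one_sq (by linarith) _)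
  have hsqrtΔ : √Δ ^ 2 = (R - 1 - Q * MT) ^ 2 - 4 * (Q * MT) := by rw [Real.sq_sqrt hΔpos.le, hΔeq]
  obtain ⟨hαm0, hαlt⟩ : 0 < αm ∧ αm < αp := by
    rw [hαm, hαp]; exact quadratic_roots_pos hb hs hΔeq hΔpos
  have hE1 := isSITEquilibrium_of_root hφ hγ hμA1 hμF hr1 hMT0 (hαm0.trans hαlt) hRdef hQ
    (quadratic_root_of_sq_eq hsqrtΔ hαp) hM1 hA1 hF1
  have hE2 := isSITEquilibrium_of_root hφ hγ hμA1 hμF hr1 hMT0 hαm0 hRdef hQ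
    (quadratic_root_of_sq_eq (by rwa [neg_sq]) (by rw [hαm]; ring)) hM2 hA2 hF2
  have hM1pos : 0 < M1 := by rw [hM1]; exact div_pos hMT0 (hαm0.trans hαlt)
  have hM12 : M1 < M2 := by rw [hM1, hM2]; exact div_lt_div_of_pos_left hMT0 hαm0 hαlt
  have hA1pos : 0 < A1 := by rw [hA1]; positivity
  have hA12 : A1 < A2 := by rw [hA1, hA2]; gcongr
  have hF1pos : 0 < F1 := by rw [hF1]; positivity
  have hF12 : F1 < F2 := by
    rw [hF1, hF2]; exact affine_mul_div_lt_affine_mul_div (by positivity) hμA2.le hφ hA1pos.le hA12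
  exact ⟨hΔpos, hαm0, hαlt, hE1, hE2, hA1pos, hA12, hM1pos, hM12, hF1pos, hF12⟩

/-- If `R > 1` and `0 < M_T < M_{T1}` then `Δ(M_T) > 0`, `0 < α₋ < α₊`, and the two
triples `E₁ < E₂` built from `α₊` and `α₋` are positive equilibria of the SIT vector
field `H_{M_T}` with `E₁ < E₂` componentwise. -/
theorem stmt_2 (φ γ μA1 μA2 μF μM r : ℝ)
    (hφ : 0 < φ) (hγ : 0 < γ) (hμA1 : 0 < μA1) (hμA2 : 0 < μA2)
    (hμF : 0 < μF) (hμM : 0 < μM) (hr0 : 0 < r) (hr1 : r < 1)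
    (R Q MT1 MT Δ αp αm M1 M2 A1 A2 F1 F2 : ℝ)
    (hRdef : R = r * γ * φ / (μF * (γ + μA1))) (hR : 1 < R)
    (hQ : Q = μA2 * μM / ((γ + μA1) * (1 - r) * γ))
    (hMT1 : MT1 = (Real.sqrt R - 1) ^ 2 / Q)
    (hMT0 : 0 < MT) (hMTlt : MT < MT1)
    (hΔ : Δ = ((Real.sqrt R - 1) ^ 2 - Q * MT) * ((Real.sqrt R + 1) ^ 2 - Q * MT))
    (hαp : αp = ((R - 1 - Q * MT) + Real.sqrt Δ) / 2)
    (hαm : αm = ((R - 1 - Q * MT) - Real.sqrt Δ) / 2)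
    (hM1 : M1 = MT / αp) (hM2 : M2 = MT / αm)
    (hA1 : A1 = μM * M1 / ((1 - r) * γ)) (hA2 : A2 = μM * M2 / ((1 - r) * γ))
    (hF1 : F1 = (γ + μA1 + μA2 * A1) * A1 / φ)
    (hF2 : F2 = (γ + μA1 + μA2 * A2) * A2 / φ) :
    0 < Δ ∧ 0 < αm ∧ αm < αp ∧
    (φ * F1 - (γ + μA1 + μA2 * A1) * A1 = 0 ∧
      (1 - r) * γ * A1 - μM * M1 = 0 ∧
      (M1 / (M1 + MT)) * r * γ * A1 - μF * F1 = 0) ∧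
    (φ * F2 - (γ + μA1 + μA2 * A2) * A2 = 0 ∧
      (1 - r) * γ * A2 - μM * M2 = 0 ∧
      (M2 / (M2 + MT)) * r * γ * A2 - μF * F2 = 0) ∧
    (0 < A1 ∧ A1 < A2 ∧ 0 < M1 ∧ M1 < M2 ∧ 0 < F1 ∧ F1 < F2) :=
  stmt_2_general φ γ μA1 μA2 μF μM r hφ hγ hμA1 hμA2 hμF hμM hr1 R Q MT1 MT Δ αp αm M1 M2 A1 A2 F1
    F2 hRdef hR hQ hMT1 hMT0 hMTlt hΔ hαp hαm hM1 hM2 hA1 hA2 hF1 hF2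
end

section
/- Assume R > 1 and M_T > M_{T1}. Then the SIT vector field H_{M_T} has no positive equilibrium: there is no triple (A,M,F) with A > 0, M > 0, F > 0 satisfying φF = (γ+μ_{A,1}+μ_{A,2}A)A, (1−r)γA = μ_M M, and (M/(M+M_T))rγA = μ_F F. -/
/-!
At a positive equilibrium, eliminating `M` and `F` and passing to the normalized larval density
`u = μ_{A,2} A / (γ + μ_{A,1})` leaves the single equation `R u = (1 + u) (u + Q M_T)`.
With `m = Q M_T` this reads `R = 1 + m + u + m / u ≥ (1 + √m)²` by AM-GM, so `Q M_T ≤ (√R - 1)²`,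
that is `M_T ≤ M_{T1}`.
-/

theorem le_sq_sqrt_sub_one_of_mul_eq {R u m : ℝ} (hu : 0 < u) (hm : 0 ≤ m)
    (h : R * u = (1 + u) * (u + m)) : m ≤ (√R - 1) ^ 2 := by
  have hsq : (1 + √m) ^ 2 ≤ R := by
    refine le_of_mul_le_mul_right ?_ hu
    nlinarith [sq_nonneg (u - √m), Real.sq_sqrt hm]
  have hle : √m ≤ √R - 1 := by
    linarith [Real.le_sqrt_of_sq_le hsq]
  calc m = √m ^ 2 := (Real.sq_sqrt hm).symm
    _ ≤ (√R - 1) ^ 2 := pow_le_pow_left₀ (Real.sqrt_nonneg m) hle 2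

theorem sit_equilibrium_normalized_eq {φ γ μA1 μA2 μF μM r R Q MT A M F : ℝ}
    (hγ : 0 < γ) (hμA1 : 0 < μA1) (hμA2 : 0 < μA2) (hμF : 0 < μF) (hr1 : r < 1)
    (hRdef : R = r * γ * φ / (μF * (γ + μA1)))
    (hQ : Q = μA2 * μM / ((γ + μA1) * (1 - r) * γ))
    (hMT : 0 ≤ MT) (hA : 0 < A) (hM : 0 < M)
    (hAeq : φ * F = (γ + μA1 + μA2 * A) * A)
    (hMeq : (1 - r) * γ * A = μM * M)
    (hFeq : (M / (M + MT)) * r * γ * A = μF * F) :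
    R * (μA2 * A / (γ + μA1)) =
      (1 + μA2 * A / (γ + μA1)) * (μA2 * A / (γ + μA1) + Q * MT) := by
  have hc : 0 < γ + μA1 := by positivity
  have h1r : 0 < 1 - r := by linarith
  have hFeq' : M * (r * γ * A) = μF * F * (M + MT) := by
    field_simp at hFeq
    linarith
  rw [hRdef, hQ]
  field_simp
  refine mul_right_cancel₀ hA.ne' ?_
  linear_combination (r * γ * φ * A - μF * (γ + μA1 + μA2 * A) * A) * hMeq + μM * φ * hFeq'
    + μF * (μM * M + μM * MT) * hAeq

theorem stmt_3_general (φ γ μA1 μA2 μF μM r : ℝ)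
    (hγ : 0 < γ) (hμA1 : 0 < μA1) (hμA2 : 0 < μA2)
    (hμF : 0 < μF) (hμM : 0 < μM) (hr1 : r < 1)
    (R Q MT1 MT : ℝ)
    (hRdef : R = r * γ * φ / (μF * (γ + μA1)))
    (hQ : Q = μA2 * μM / ((γ + μA1) * (1 - r) * γ))
    (hMT1 : MT1 = (Real.sqrt R - 1) ^ 2 / Q)
    (hMT : MT1 < MT) :
    ¬ ∃ A M F : ℝ, 0 < A ∧ 0 < M ∧ 0 < F ∧
      φ * F = (γ + μA1 + μA2 * A) * A ∧
      (1 - r) * γ * A = μM * M ∧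
      (M / (M + MT)) * r * γ * A = μF * F := by
  rintro ⟨A, M, F, hA, hM, -, hAeq, hMeq, hFeq⟩
  have hQpos : 0 < Q := by
    have : 0 < 1 - r := by linarith
    rw [hQ]; positivity
  have hMT0 : 0 ≤ MT := (hMT1 ▸ div_nonneg (sq_nonneg _) hQpos.le).trans hMT.le
  have hreduced := sit_equilibrium_normalized_eq hγ hμA1 hμA2 hμF hr1 hRdef hQ hMT0 hA hM
    hAeq hMeq hFeq
  have hQMT_le : Q * MT ≤ (√R - 1) ^ 2 :=
    le_sq_sqrt_sub_one_of_mul_eq (by positivity) (mul_nonneg hQpos.le hMT0) hreduced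
  have hQMT_gt : (√R - 1) ^ 2 < Q * MT := by
    simpa [hMT1, mul_div_cancel₀ _ hQpos.ne'] using mul_lt_mul_of_pos_left hMT hQpos
  exact hQMT_le.not_gt hQMT_gt

/-- If `R > 1` and `M_T > M_{T1}`, the SIT vector field `H_{M_T}` has no positive
equilibrium. -/
theorem stmt_3 (φ γ μA1 μA2 μF μM r : ℝ)
    (hφ : 0 < φ) (hγ : 0 < γ) (hμA1 : 0 < μA1) (hμA2 : 0 < μA2)
    (hμF : 0 < μF) (hμM : 0 < μM) (hr0 : 0 < r) (hr1 : r < 1)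
    (R Q MT1 MT : ℝ)
    (hRdef : R = r * γ * φ / (μF * (γ + μA1))) (hR : 1 < R)
    (hQ : Q = μA2 * μM / ((γ + μA1) * (1 - r) * γ))
    (hMT1 : MT1 = (Real.sqrt R - 1) ^ 2 / Q)
    (hMT : MT1 < MT) :
    ¬ ∃ A M F : ℝ, 0 < A ∧ 0 < M ∧ 0 < F ∧
      φ * F = (γ + μA1 + μA2 * A) * A ∧
      (1 - r) * γ * A = μM * M ∧
      (M / (M + MT)) * r * γ * A = μF * F :=
  stmt_3_general φ γ μA1 μA2 μF μM r hγ hμA1 hμA2 hμF hμM hr1 R Q MT1 MT hRdef hQ hMT1 hMT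
end

section
/- Assume R > 1 and M_T = M_{T1}. Then the SIT vector field H_{M_T} has exactly one positive equilibrium E_† = (A_†, M_†, F_†): the triple with M_† = M_{T1}/α, α = (R−1−Q·M_{T1})/2, A_† = μ_M M_†/((1−r)γ), F_† = (γ+μ_{A,1}+μ_{A,2}A_†)A_†/φ satisfies the equilibrium equations with all components positive, and any positive solution of the equilibrium equations equals this triple. -/
/-!
Eliminating `F` and `A` through the first two equilibrium equations turns the third into the
quadratic `R M = (1 + Q M) (M + M_T)` in the wild-male level `M`. At the threshold
`Q M_{T1} = (√R - 1)²` its discriminant vanishes: multiplied by `Q` it reads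
`(Q M - (√R - 1))² = 0`, and the double root `M = (√R - 1) / Q` is `M_†` because `α = √R - 1`.
-/

/-- The right-hand side is `R M = (1 + Q M) (M + M_T)` with `R` and `Q` written out. -/
theorem sit_third_eq_iff {φ γ μA1 μA2 μF μM r MT A M F : ℝ}
    (hφ : φ ≠ 0) (hγμ : γ + μA1 ≠ 0) (hμF : μF ≠ 0) (hγ : γ ≠ 0) (h1r : 1 - r ≠ 0)
    (hA : A ≠ 0) (hMMT : M + MT ≠ 0)
    (hF : φ * F = (γ + μA1 + μA2 * A) * A) (hM : (1 - r) * γ * A = μM * M) :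
    (M / (M + MT)) * r * γ * A = μF * F ↔
      r * γ * φ / (μF * (γ + μA1)) * M =
        (1 + μA2 * μM / ((γ + μA1) * (1 - r) * γ) * M) * (M + MT) := by
  have hc : A * (μF * (γ + μA1)) / (φ * (M + MT)) ≠ 0 := by positivity
  have key : M / (M + MT) * r * γ * A - μF * F =
      A * (μF * (γ + μA1)) / (φ * (M + MT)) *
        (r * γ * φ / (μF * (γ + μA1)) * M -
          (1 + μA2 * μM / ((γ + μA1) * (1 - r) * γ) * M) * (M + MT)) := by
    field_simp
    linear_combination -(γ * (1 - r) * (M + MT) * μF) * hF - (M + MT) * μF * A * μA2 * hM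
  rw [← sub_eq_zero, key, mul_eq_zero_iff_left hc, sub_eq_zero]

theorem mul_eq_one_add_mul_mul_add_iff {R Q s MT M : ℝ} (hQ : Q ≠ 0) (hs : s ^ 2 = R)
    (hMT : Q * MT = (s - 1) ^ 2) :
    R * M = (1 + Q * M) * (M + MT) ↔ Q * M = s - 1 := by
  have key : Q * (R * M - (1 + Q * M) * (M + MT)) = -(Q * M - (s - 1)) ^ 2 := by
    linear_combination -(Q * M) * hs - (1 + Q * M) * hMT
  rw [← sub_eq_zero, ← mul_right_inj' hQ, mul_zero, key, neg_eq_zero, sq_eq_zero_iff,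
    sub_eq_zero]

theorem stmt_4_general (φ γ μA1 μA2 μF μM r : ℝ)
    (hφ : 0 < φ) (hγ : 0 < γ) (hμA1 : 0 < μA1) (hμA2 : 0 < μA2)
    (hμF : 0 < μF) (hμM : 0 < μM) (hr1 : r < 1)
    (R Q MT1 α Adag Mdag Fdag : ℝ)
    (hRdef : R = r * γ * φ / (μF * (γ + μA1))) (hR : 1 < R)
    (hQ : Q = μA2 * μM / ((γ + μA1) * (1 - r) * γ))
    (hMT1 : MT1 = (Real.sqrt R - 1) ^ 2 / Q)
    (hα : α = (R - 1 - Q * MT1) / 2)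
    (hMdag : Mdag = MT1 / α)
    (hAdag : Adag = μM * Mdag / ((1 - r) * γ))
    (hFdag : Fdag = (γ + μA1 + μA2 * Adag) * Adag / φ) :
    (0 < Adag ∧ 0 < Mdag ∧ 0 < Fdag) ∧
    (φ * Fdag = (γ + μA1 + μA2 * Adag) * Adag ∧
      (1 - r) * γ * Adag = μM * Mdag ∧
      (Mdag / (Mdag + MT1)) * r * γ * Adag = μF * Fdag) ∧
    (∀ A M F : ℝ, 0 < A → 0 < M → 0 < F →
      φ * F = (γ + μA1 + μA2 * A) * A →
      (1 - r) * γ * A = μM * M →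
      (M / (M + MT1)) * r * γ * A = μF * F →
      A = Adag ∧ M = Mdag ∧ F = Fdag) := by
  have h1r : 0 < 1 - r := by linarith
  have hQ_pos : 0 < Q := by rw [hQ]; positivity
  set s := Real.sqrt R
  have hs : s ^ 2 = R := Real.sq_sqrt (by linarith)
  have hs1 : 1 < s := Real.lt_sqrt_of_sq_lt (by linarith)
  have hQMT1 : Q * MT1 = (s - 1) ^ 2 := by rw [hMT1]; field_simp
  have hα_eq : α = s - 1 := by rw [hα, hQMT1, ← hs]; ring
  have hQMdag : Q * Mdag = s - 1 := by
    rw [hMdag, hα_eq, ← mul_div_assoc, hQMT1, sq, mul_div_cancel_right₀ _ (by linarith)]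
  have hMT1_pos : 0 < MT1 := pos_of_mul_pos_right (by rw [hQMT1]; positivity) hQ_pos.le
  have hMdag_pos : 0 < Mdag := pos_of_mul_pos_right (by rw [hQMdag]; linarith) hQ_pos.le
  have hAdag_pos : 0 < Adag := by rw [hAdag]; positivity
  have hF_dag : φ * Fdag = (γ + μA1 + μA2 * Adag) * Adag := by rw [hFdag]; field_simp
  have hM_dag : (1 - r) * γ * Adag = μM * Mdag := by rw [hAdag]; field_simp
  have third_iff : ∀ A M F : ℝ, 0 < A → 0 < M →
      φ * F = (γ + μA1 + μA2 * A) * A → (1 - r) * γ * A = μM * M →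
      ((M / (M + MT1)) * r * γ * A = μF * F ↔ Q * M = s - 1) := fun A M F hA hM hF hMA => by
    rw [sit_third_eq_iff hφ.ne' (by positivity) hμF.ne' hγ.ne' h1r.ne' hA.ne' (by positivity)
      hF hMA, ← hRdef, ← hQ]
    exact mul_eq_one_add_mul_mul_add_iff hQ_pos.ne' hs hQMT1
  refine ⟨⟨hAdag_pos, hMdag_pos, by rw [hFdag]; positivity⟩,
    ⟨hF_dag, hM_dag, (third_iff _ _ _ hAdag_pos hMdag_pos hF_dag hM_dag).mpr hQMdag⟩, ?_⟩
  intro A M F hA hM _ hF hMA hthird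
  obtain rfl : M = Mdag :=
    mul_left_cancel₀ hQ_pos.ne' (((third_iff A M F hA hM hF hMA).mp hthird).trans hQMdag.symm)
  obtain rfl : A = Adag := mul_left_cancel₀ (by positivity) (hMA.trans hM_dag.symm)
  exact ⟨rfl, rfl, mul_left_cancel₀ hφ.ne' (hF.trans hF_dag.symm)⟩

/-- If `R > 1` and `M_T = M_{T1}`, the SIT vector field `H_{M_T}` has exactly one
positive equilibrium `E† = (A†, M†, F†)`. -/
theorem stmt_4 (φ γ μA1 μA2 μF μM r : ℝ)
    (hφ : 0 < φ) (hγ : 0 < γ) (hμA1 : 0 < μA1) (hμA2 : 0 < μA2)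
    (hμF : 0 < μF) (hμM : 0 < μM) (hr0 : 0 < r) (hr1 : r < 1)
    (R Q MT1 α Adag Mdag Fdag : ℝ)
    (hRdef : R = r * γ * φ / (μF * (γ + μA1))) (hR : 1 < R)
    (hQ : Q = μA2 * μM / ((γ + μA1) * (1 - r) * γ))
    (hMT1 : MT1 = (Real.sqrt R - 1) ^ 2 / Q)
    (hα : α = (R - 1 - Q * MT1) / 2)
    (hMdag : Mdag = MT1 / α)
    (hAdag : Adag = μM * Mdag / ((1 - r) * γ))
    (hFdag : Fdag = (γ + μA1 + μA2 * Adag) * Adag / φ) :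
    (0 < Adag ∧ 0 < Mdag ∧ 0 < Fdag) ∧
    (φ * Fdag = (γ + μA1 + μA2 * Adag) * Adag ∧
      (1 - r) * γ * Adag = μM * Mdag ∧
      (Mdag / (Mdag + MT1)) * r * γ * Adag = μF * Fdag) ∧
    (∀ A M F : ℝ, 0 < A → 0 < M → 0 < F →
      φ * F = (γ + μA1 + μA2 * A) * A →
      (1 - r) * γ * A = μM * M →
      (M / (M + MT1)) * r * γ * A = μF * F →
      A = Adag ∧ M = Mdag ∧ F = Fdag) :=
  stmt_4_general φ γ μA1 μA2 μF μM r hφ hγ hμA1 hμA2 hμF hμM hr1 R Q MT1 α Adag Mdag Fdag hRdef hR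
    hQ hMT1 hα hMdag hAdag hFdag
end

section
/- (Theorem 2.1, item 1.) Assume R > 1 and M_T > M_{T1}. Then the elimination equilibrium 0 is globally asymptotically attracting on the nonnegative orthant: every differentiable function w = (A,M,F) : [0,∞) → ℝ³ with w(t) ≥ 0 componentwise for all t ≥ 0 and w'(t) = H_{M_T}(w(t)) for all t ≥ 0 satisfies w(t) → (0,0,0) as t → ∞. -/
/-!
Bounds on `limsup` propagate along the cycle `A → M → F → A`. If `limsup A ≤ a`, then
`limsup M ≤ m := (1 - r) γ a / μ_M`, the fertile fraction of matings is eventually at most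
`m / (m + M_T)`, so `limsup F ≤ m / (m + M_T) · r γ a / μ_F`, and the `A`-equation then gives
`limsup A ≤ θ a` with `θ = √R / (1 + √(Q M_T))` (an AM-GM estimate), and `M_T > M_{T1}` is
exactly `θ < 1`. The Lyapunov function `A + (2φ / μ_F) F` gives a first bound, and iterating
the contraction gives `limsup A = 0`, hence `M, F → 0`. Every `limsup` bound is a barrier
argument: above the level, the derivative is at most a negative constant.
-/

open Set Filter Topology

theorem eventually_hasDerivAt_of_hasDerivWithinAt_Ici {f g : ℝ → ℝ} {a : ℝ}
    (h : ∀ t, a ≤ t → HasDerivWithinAt f (g t) (Ici a) t) :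
    ∀ᶠ t in atTop, HasDerivAt f (g t) t :=
  (eventually_gt_atTop a).mono fun t ht => (h t ht.le).hasDerivAt (Ici_mem_nhds ht)

theorem eventually_le_of_hasDerivAt_le_neg {f g : ℝ → ℝ} {β δ : ℝ} (hδ : 0 < δ)
    (hf : ∀ᶠ t in atTop, HasDerivAt f (g t) t ∧ (β ≤ f t → g t ≤ -δ)) :
    ∀ᶠ t in atTop, f t ≤ β := by
  obtain ⟨T, hT⟩ := eventually_atTop.1 hf
  have hcont : ∀ a b, T ≤ a → ContinuousOn f (Icc a b) := fun a b ha x hx =>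
    (hT x (ha.trans hx.1)).1.continuousAt.continuousWithinAt
  have hderiv : ∀ a b, T ≤ a → ∀ x ∈ Ico a b, HasDerivWithinAt f (g x) (Ici x) x :=
    fun a b ha x hx => (hT x (ha.trans hx.1)).1.hasDerivWithinAt
  obtain ⟨t₀, hTt₀, hft₀⟩ : ∃ t₀, T ≤ t₀ ∧ f t₀ ≤ β := by
    by_contra! hgt
    -- above `β` the slope is at most `-δ`, so `f` would cross `β` by time `t₁`
    set t₁ := T + (f T - β) / δ
    have hTt₁ : T ≤ t₁ :=
      le_add_of_nonneg_right (div_nonneg (sub_nonneg.2 (hgt T le_rfl).le) hδ.le)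
    have hB : ∀ x, HasDerivAt (fun t => f T - δ * (t - T)) (-δ) x := fun x => by
      simpa using (((hasDerivAt_id x).sub_const T).const_mul δ).const_sub (f T)
    have hline := image_le_of_deriv_right_le_deriv_boundary (hcont T t₁ le_rfl)
      (hderiv T t₁ le_rfl) (by simp) (by fun_prop) (fun x _ => (hB x).hasDerivWithinAt)
      (fun x hx => (hT x hx.1).2 (hgt x hx.1).le) ⟨hTt₁, le_rfl⟩
    have : f T - δ * (t₁ - T) = β := by simp only [t₁]; field_simp; ring
    linarith [hgt t₁ hTt₁]
  -- once below `β`, `f` stays there: at level `β` its slope is negative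
  refine eventually_atTop.2 ⟨t₀, fun t ht => ?_⟩
  exact image_le_of_deriv_right_lt_deriv_boundary' (hcont t₀ t hTt₀) (hderiv t₀ t hTt₀)
    (B' := fun _ => 0) hft₀ continuousOn_const (fun x _ => hasDerivWithinAt_const x _ β)
    (fun x hx hfx => by linarith [(hT x (hTt₀.trans hx.1)).2 hfx.ge]) ⟨ht, le_rfl⟩

/-- `limsup_{t → ∞} f t ≤ L`, stated directly to avoid the boundedness side conditions of
`Filter.limsup` on `ℝ`. -/
def LimsupLE (f : ℝ → ℝ) (L : ℝ) : Prop :=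
  ∀ b, L < b → ∀ᶠ t in atTop, f t ≤ b

namespace LimsupLE

variable {f g : ℝ → ℝ} {a b : ℝ}

theorem mono (hf : LimsupLE f a) (hab : a ≤ b) : LimsupLE f b :=
  fun c hc => hf c (hab.trans_lt hc)

theorem of_eventually_le (hg : LimsupLE g a) (hfg : ∀ᶠ t in atTop, f t ≤ g t) :
    LimsupLE f a :=
  fun c hc => (hg c hc).and hfg |>.mono fun _ h => h.2.trans h.1

theorem comp {ψ : ℝ → ℝ} (hf : LimsupLE f a) (ha : 0 ≤ a) (hf0 : ∀ᶠ t in atTop, 0 ≤ f t)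
    (hψ : MonotoneOn ψ (Ici 0)) (hψa : ContinuousAt ψ a) : LimsupLE (fun t => ψ (f t)) (ψ a) := by
  intro c hc
  obtain ⟨x, hax, hψx⟩ := (hψa.eventually (gt_mem_nhds hc)).exists_gt
  filter_upwards [hf x hax, hf0] with t hfx hft
  exact (hψ hft (ha.trans hax.le) hfx).trans hψx.le

theorem mul (hf : LimsupLE f a) (hg : LimsupLE g b) (ha : 0 ≤ a)
    (hg0 : ∀ᶠ t in atTop, 0 ≤ g t) :
    LimsupLE (fun t => f t * g t) (a * b) := by
  intro c hc
  have hcont : ContinuousAt (fun s : ℝ => (a + s) * (b + s)) 0 := by fun_prop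
  obtain ⟨s, hs, hsc⟩ := (hcont.eventually (gt_mem_nhds (by simpa using hc))).exists_gt
  filter_upwards [hf (a + s) (by linarith), hg (b + s) (by linarith), hg0]
    with t hft hgt hg0t
  exact (mul_le_mul hft hgt hg0t (by linarith)).trans hsc.le

theorem of_hasDerivAt {x g u ψ : ℝ → ℝ} {y : ℝ} (hψ : StrictMonoOn ψ (Ici y))
    (hx : ∀ᶠ t in atTop, HasDerivAt x (g t) t ∧ g t ≤ u t - ψ (x t))
    (hu : LimsupLE u (ψ y)) : LimsupLE x y := by
  intro b hb
  have hψb : ψ y < ψ b := hψ self_mem_Ici hb.le hb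
  refine eventually_le_of_hasDerivAt_le_neg (g := g) (half_pos (sub_pos.2 hψb)) ?_
  filter_upwards [hx, hu ((ψ y + ψ b) / 2) (by linarith)] with t ⟨hxt, hgt⟩ hut
  refine ⟨hxt, fun hbx => ?_⟩
  have := hψ.monotoneOn hb.le (hb.le.trans hbx) hbx
  linarith

theorem zero_of_contraction {θ a₀ : ℝ} (hθ0 : 0 ≤ θ) (hθ1 : θ < 1) (ha₀ : 0 ≤ a₀)
    (hf : LimsupLE f a₀) (hstep : ∀ a, 0 ≤ a → LimsupLE f a → LimsupLE f (θ * a)) :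
    LimsupLE f 0 := by
  have hpow : ∀ n : ℕ, LimsupLE f (θ ^ n * a₀) := by
    intro n
    induction n with
    | zero => simpa using hf
    | succ n ih => simpa [pow_succ, mul_comm, mul_left_comm] using hstep _ (by positivity) ih
  intro b hb
  have : Tendsto (fun n : ℕ => θ ^ n * a₀) atTop (𝓝 0) := by
    simpa using (tendsto_pow_atTop_nhds_zero_of_lt_one hθ0 hθ1).mul_const a₀
  obtain ⟨n, hn⟩ := (this.eventually (gt_mem_nhds hb)).exists
  exact hpow n b hn

theorem tendsto_zero (hf : LimsupLE f 0) (hf0 : ∀ᶠ t in atTop, 0 ≤ f t) :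
    Tendsto f atTop (𝓝 0) := by
  refine tendsto_order.2 ⟨fun c hc => hf0.mono fun t ht => hc.trans_le ht, fun c hc => ?_⟩
  exact (hf (c / 2) (half_pos hc)).mono fun t ht => ht.trans_lt (half_lt_self hc)

end LimsupLE

theorem sq_mul_le_of_mul_one_add_eq {q k s θ ρ a : ℝ} (hq : 0 < q) (hk : 0 ≤ k)
    (hs : s ^ 2 = q * k) (hθ0 : 0 ≤ θ) (hθ1 : θ ≤ 1) (hρ : θ * (1 + s) = ρ) (ha : 0 ≤ a) :
    ρ ^ 2 * a ≤ (θ + q * θ ^ 2 * a) * (a + k) := by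
  have amgm : 2 * s * a ≤ k + q * a ^ 2 := by
    refine le_of_mul_le_mul_left ?_ hq
    nlinarith [sq_nonneg (q * a - s)]
  have hdiff : (θ + q * θ ^ 2 * a) * (a + k) - ρ ^ 2 * a =
      θ * (1 - θ) * (a + k) + θ ^ 2 * (k + q * a ^ 2 - 2 * s * a) := by
    rw [← hρ]; linear_combination (-(θ ^ 2 * a)) * hs
  have : 0 ≤ θ * (1 - θ) * (a + k) + θ ^ 2 * (k + q * a ^ 2 - 2 * s * a) := by
    have := sub_nonneg.2 hθ1; have := sub_nonneg.2 amgm; positivity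
  linarith

namespace SIT

variable {φ γ μA1 μA2 μF μM r MT : ℝ} {A M F : ℝ → ℝ}

theorem limsupLE_males (hμM : 0 < μM) (hr1 : r ≤ 1) (hγ : 0 ≤ γ)
    (hM : ∀ᶠ t in atTop, HasDerivAt M ((1 - r) * γ * A t - μM * M t) t)
    {a : ℝ} (ha : 0 ≤ a) (hA : LimsupLE A a) (hA0 : ∀ᶠ t in atTop, 0 ≤ A t) :
    LimsupLE M ((1 - r) * γ * a / μM) := by
  refine LimsupLE.of_hasDerivAt ((strictMono_mul_left_of_pos hμM).strictMonoOn _)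
    (hM.mono fun t h => ⟨h, le_rfl⟩) ?_
  rw [mul_div_cancel₀ _ hμM.ne']
  have hmono := (monotone_id.const_mul (mul_nonneg (sub_nonneg.2 hr1) hγ)).monotoneOn (Ici 0)
  exact hA.comp ha hA0 hmono (by fun_prop)

theorem limsupLE_females (hμF : 0 < μF) (hr : 0 ≤ r) (hγ : 0 ≤ γ) (hMT : 0 < MT)
    (hF : ∀ᶠ t in atTop, HasDerivAt F (M t / (M t + MT) * r * γ * A t - μF * F t) t)
    {a m : ℝ} (hm : 0 ≤ m) (hA : LimsupLE A a) (hM : LimsupLE M m)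
    (hA0 : ∀ᶠ t in atTop, 0 ≤ A t) (hM0 : ∀ᶠ t in atTop, 0 ≤ M t) :
    LimsupLE F (m / (m + MT) * r * γ * a / μF) := by
  have hmono : MonotoneOn (fun x => x / (x + MT) * r * γ) (Ici 0) := by
    intro x (hx : 0 ≤ x) y (hy : 0 ≤ y) hxy
    have : x / (x + MT) ≤ y / (y + MT) := by
      rw [div_le_div_iff₀ (by positivity) (by positivity)]
      nlinarith
    simpa only [mul_assoc] using mul_le_mul_of_nonneg_right this (mul_nonneg hr hγ)
  have hforcing := (hM.comp hm hM0 hmono (by fun_prop (disch := positivity))).mul hA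
    (by positivity) hA0
  refine LimsupLE.of_hasDerivAt ((strictMono_mul_left_of_pos hμF).strictMonoOn _)
    (hF.mono fun t h => ⟨h, le_rfl⟩) ?_
  rwa [mul_div_cancel₀ _ hμF.ne']

theorem limsupLE_aquatic (hφ : 0 ≤ φ) (hγμ : 0 < γ + μA1) (hμA2 : 0 ≤ μA2)
    (hA : ∀ᶠ t in atTop, HasDerivAt A (φ * F t - (γ + μA1 + μA2 * A t) * A t) t)
    {f y : ℝ} (hf : 0 ≤ f) (hy : 0 ≤ y) (hF : LimsupLE F f) (hF0 : ∀ᶠ t in atTop, 0 ≤ F t)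
    (hforce : φ * f ≤ (γ + μA1 + μA2 * y) * y) : LimsupLE A y := by
  have hmono : StrictMonoOn (fun x => (γ + μA1 + μA2 * x) * x) (Ici y) := by
    intro x hx z _ hxz
    have hx0 : 0 ≤ x := hy.trans hx
    have := mul_le_mul_of_nonneg_left hxz.le hμA2
    nlinarith
  refine LimsupLE.of_hasDerivAt hmono (hA.mono fun t h => ⟨h, le_rfl⟩) ?_
  exact (hF.comp hf hF0 ((monotone_id.const_mul hφ).monotoneOn _) (by fun_prop)).mono hforce

theorem exists_limsupLE_aquatic (hφ : 0 ≤ φ) (hγμ : 0 ≤ γ + μA1) (hμA2 : 0 < μA2)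
    (hμF : 0 < μF) (hr : 0 ≤ r) (hγ : 0 ≤ γ) (hMT : 0 ≤ MT)
    (hA : ∀ᶠ t in atTop, HasDerivAt A (φ * F t - (γ + μA1 + μA2 * A t) * A t) t)
    (hF : ∀ᶠ t in atTop, HasDerivAt F (M t / (M t + MT) * r * γ * A t - μF * F t) t)
    (hA0 : ∀ᶠ t in atTop, 0 ≤ A t) (hM0 : ∀ᶠ t in atTop, 0 ≤ M t)
    (hF0 : ∀ᶠ t in atTop, 0 ≤ F t) : ∃ a, 0 ≤ a ∧ LimsupLE A a := by
  set η := 2 * φ / μF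
  set C := (η * r * γ + μF / 2) ^ 2 / (4 * μA2)
  -- since `η μF = 2φ`, `V = A + η F` satisfies `V' ≤ C - (μF / 2) V`
  have hV : LimsupLE (fun t => A t + η * F t) (C / (μF / 2)) := by
    refine LimsupLE.of_hasDerivAt ((strictMono_mul_left_of_pos (half_pos hμF)).strictMonoOn _)
      (u := fun _ => C)
      (g := fun t => (φ * F t - (γ + μA1 + μA2 * A t) * A t) +
        η * (M t / (M t + MT) * r * γ * A t - μF * F t)) ?_ ?_
    · filter_upwards [hA, hF, hA0, hM0, hF0] with t hAt hFt hA0t hM0t hF0t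
      refine ⟨hAt.add (hFt.const_mul η), ?_⟩
      have hfrac : M t / (M t + MT) ≤ 1 := div_le_one_of_le₀ (by linarith) (by positivity)
      have hforcing : η * (M t / (M t + MT) * r * γ * A t) ≤ η * (r * γ * A t) := by
        have := mul_le_mul_of_nonneg_right hfrac (by positivity : 0 ≤ r * γ * A t)
        exact mul_le_mul_of_nonneg_left (by linarith) (by positivity)
      have hamgm : (η * r * γ + μF / 2) * A t - μA2 * A t ^ 2 ≤ C := by
        rw [le_div_iff₀ (by positivity)]
        nlinarith [sq_nonneg (η * r * γ + μF / 2 - 2 * μA2 * A t)]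
      have hηF : η * (μF * F t) = 2 * φ * F t := by simp only [η]; field_simp
      have : 0 ≤ (γ + μA1) * A t := by positivity
      linarith
    · rw [mul_div_cancel₀ _ (half_pos hμF).ne']
      exact fun b hb => Eventually.of_forall fun _ => hb.le
  refine ⟨C / (μF / 2), by positivity, hV.of_eventually_le ?_⟩
  filter_upwards [hF0] with t ht
  have : 0 ≤ η * F t := by positivity
  linarith

theorem egg_input_le_aquatic_loss {R Q s θ a : ℝ}
    (hφ : 0 < φ) (hγ : 0 < γ) (hμA1 : 0 < μA1) (hμA2 : 0 < μA2)
    (hμF : 0 < μF) (hμM : 0 < μM) (hr0 : 0 < r) (hr1 : r < 1) (hMT : 0 ≤ MT)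
    (hR : R = r * γ * φ / (μF * (γ + μA1))) (hQ : Q = μA2 * μM / ((γ + μA1) * (1 - r) * γ))
    (hs : s ^ 2 = Q * MT) (hθ0 : 0 ≤ θ) (hθ1 : θ ≤ 1) (hθ : θ * (1 + s) = √R) (ha : 0 ≤ a) :
    φ * ((1 - r) * γ * a / μM / ((1 - r) * γ * a / μM + MT) * r * γ * a / μF) ≤
      (γ + μA1 + μA2 * (θ * a)) * (θ * a) := by
  have h1r : 0 < 1 - r := sub_pos.2 hr1
  set k := μM * MT / ((1 - r) * γ)
  set q := μA2 / (γ + μA1)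
  have hk : 0 ≤ k := by positivity
  have hsqk : s ^ 2 = q * k := by rw [hs, hQ]; simp only [k, q]; field_simp
  have key := sq_mul_le_of_mul_one_add_eq (by positivity) hk hsqk hθ0 hθ1 hθ ha
  rw [Real.sq_sqrt (by rw [hR]; positivity)] at key
  rcases ha.eq_or_lt with rfl | ha
  · simp
  calc φ * ((1 - r) * γ * a / μM / ((1 - r) * γ * a / μM + MT) * r * γ * a / μF)
      = (γ + μA1) * a * (R * a / (a + k)) := by
        rw [hR]; simp only [k]; field_simp
    _ ≤ (γ + μA1) * a * (θ + q * θ ^ 2 * a) := by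
        gcongr
        rwa [div_le_iff₀ (by positivity)]
    _ = (γ + μA1 + μA2 * (θ * a)) * (θ * a) := by
        simp only [q]; field_simp

end SIT

theorem stmt_5_general (φ γ μA1 μA2 μF μM r : ℝ)
    (hφ : 0 < φ) (hγ : 0 < γ) (hμA1 : 0 < μA1) (hμA2 : 0 < μA2)
    (hμF : 0 < μF) (hμM : 0 < μM) (hr0 : 0 < r) (hr1 : r < 1)
    (R Q MT1 MT : ℝ)
    (hRdef : R = r * γ * φ / (μF * (γ + μA1)))
    (hQ : Q = μA2 * μM / ((γ + μA1) * (1 - r) * γ))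
    (hMT1 : MT1 = (Real.sqrt R - 1) ^ 2 / Q)
    (hMT : MT1 < MT)
    (A M F : ℝ → ℝ)
    (hnn : ∀ t, 0 ≤ t → 0 ≤ A t ∧ 0 ≤ M t ∧ 0 ≤ F t)
    (hA' : ∀ t, 0 ≤ t → HasDerivWithinAt A
      (φ * F t - (γ + μA1 + μA2 * A t) * A t) (Set.Ici (0 : ℝ)) t)
    (hM' : ∀ t, 0 ≤ t → HasDerivWithinAt M
      ((1 - r) * γ * A t - μM * M t) (Set.Ici (0 : ℝ)) t)
    (hF' : ∀ t, 0 ≤ t → HasDerivWithinAt F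
      ((M t / (M t + MT)) * r * γ * A t - μF * F t) (Set.Ici (0 : ℝ)) t) :
    Filter.Tendsto (fun t => (A t, M t, F t)) Filter.atTop
      (nhds ((0 : ℝ), (0 : ℝ), (0 : ℝ))) := by
  have hA := eventually_hasDerivAt_of_hasDerivWithinAt_Ici hA'
  have hM := eventually_hasDerivAt_of_hasDerivWithinAt_Ici hM'
  have hF := eventually_hasDerivAt_of_hasDerivWithinAt_Ici hF'
  have hnn' := eventually_ge_atTop (0 : ℝ) |>.mono hnn
  have hA0 := hnn'.mono fun _ h => h.1
  have hM0 := hnn'.mono fun _ h => h.2.1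
  have hF0 := hnn'.mono fun _ h => h.2.2
  have hQ0 : 0 < Q := by rw [hQ]; have := sub_pos.2 hr1; positivity
  have hMT0 : 0 < MT := lt_of_le_of_lt (by rw [hMT1]; positivity) hMT
  set s := √(Q * MT)
  set θ := √R / (1 + s)
  have hRs : √R < 1 + s := by
    have := Real.lt_sqrt_of_sq_lt ((div_lt_iff₀' hQ0).1 (hMT1 ▸ hMT))
    linarith
  have hθ0 : 0 ≤ θ := by positivity
  have hθ1 : θ < 1 := (div_lt_one (by positivity)).2 hRs
  have hstep : ∀ a, 0 ≤ a → LimsupLE A a → LimsupLE A (θ * a) := fun a ha hAa =>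
    SIT.limsupLE_aquatic hφ.le (by positivity) hμA2.le hA (by positivity) (by positivity)
      (SIT.limsupLE_females hμF hr0.le hγ.le hMT0 hF (by positivity) hAa
        (SIT.limsupLE_males hμM hr1.le hγ.le hM ha hAa hA0) hA0 hM0) hF0
      (SIT.egg_input_le_aquatic_loss hφ hγ hμA1 hμA2 hμF hμM hr0 hr1 hMT0.le hRdef hQ
        (Real.sq_sqrt (by positivity)) hθ0 hθ1.le (div_mul_cancel₀ _ (by positivity)) ha)
  obtain ⟨a₀, ha₀, hA₀⟩ := SIT.exists_limsupLE_aquatic hφ.le (by positivity) hμA2 hμF hr0.le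
    hγ.le hMT0.le hA hF hA0 hM0 hF0
  have hAlim := LimsupLE.zero_of_contraction hθ0 hθ1 ha₀ hA₀ hstep
  have hMlim : LimsupLE M 0 := by
    simpa using SIT.limsupLE_males hμM hr1.le hγ.le hM le_rfl hAlim hA0
  have hFlim : LimsupLE F 0 := by
    simpa using SIT.limsupLE_females hμF hr0.le hγ.le hMT0 hF le_rfl hAlim hMlim hA0 hM0
  exact (hAlim.tendsto_zero hA0).prodMk_nhds
    ((hMlim.tendsto_zero hM0).prodMk_nhds (hFlim.tendsto_zero hF0))

/-- (Theorem 2.1, item 1.) If `R > 1` and `M_T > M_{T1}`, then the elimination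
equilibrium `0` attracts every nonnegative solution of the SIT ODE. -/
theorem stmt_5 (φ γ μA1 μA2 μF μM r : ℝ)
    (hφ : 0 < φ) (hγ : 0 < γ) (hμA1 : 0 < μA1) (hμA2 : 0 < μA2)
    (hμF : 0 < μF) (hμM : 0 < μM) (hr0 : 0 < r) (hr1 : r < 1)
    (R Q MT1 MT : ℝ)
    (hRdef : R = r * γ * φ / (μF * (γ + μA1))) (hR : 1 < R)
    (hQ : Q = μA2 * μM / ((γ + μA1) * (1 - r) * γ))
    (hMT1 : MT1 = (Real.sqrt R - 1) ^ 2 / Q)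
    (hMT : MT1 < MT)
    (A M F : ℝ → ℝ)
    (hnn : ∀ t, 0 ≤ t → 0 ≤ A t ∧ 0 ≤ M t ∧ 0 ≤ F t)
    (hA' : ∀ t, 0 ≤ t → HasDerivWithinAt A
      (φ * F t - (γ + μA1 + μA2 * A t) * A t) (Set.Ici (0 : ℝ)) t)
    (hM' : ∀ t, 0 ≤ t → HasDerivWithinAt M
      ((1 - r) * γ * A t - μM * M t) (Set.Ici (0 : ℝ)) t)
    (hF' : ∀ t, 0 ≤ t → HasDerivWithinAt F
      ((M t / (M t + MT)) * r * γ * A t - μF * F t) (Set.Ici (0 : ℝ)) t) :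
    Filter.Tendsto (fun t => (A t, M t, F t)) Filter.atTop
      (nhds ((0 : ℝ), (0 : ℝ), (0 : ℝ))) :=
  stmt_5_general φ γ μA1 μA2 μF μM r hφ hγ hμA1 hμA2 hμF hμM hr0 hr1 R Q MT1 MT hRdef hQ hMT1 hMT A
    M F hnn hA' hM' hF'
end

section
/- (Content of Lemma 3.1, case R > 1.) Assume R > 1, let k ≥ 1, let E* = (A*,M*,F*) be the positive wild equilibrium (A* = (γ+μ_{A,1})(R−1)/μ_{A,2}, M* = (1−r)γA*/μ_M, F* = rγA*/μ_F), and let Γ = [0,kA*]×[0,kM*]×[0,kF*]. Then on each face of Γ the vector field H_{M_T} (with any M_T ≥ 0) points inward: for all (A,M,F) ∈ Γ, (i) if A = 0 then φF−(γ+μ_{A,1}+μ_{A,2}A)A ≥ 0; (ii) if M = 0 then (1−r)γA−μ_M M ≥ 0; (iii) if F = 0 then (M/(M+M_T))rγA−μ_F F ≥ 0; (iv) if A = kA* then φF−(γ+μ_{A,1}+μ_{A,2}A)A ≤ 0; (v) if M = kM* then (1−r)γA−μ_M M ≤ 0; (vi) if F = kF* then (M/(M+M_T))rγA−μ_F F ≤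 0. -/
/-! The equilibrium `E*` balances each component of `H_{M_T}`. On the far faces of the box the
gains are at most `k` times their equilibrium values while the losses are linear in `M` and `F`
and superlinear in `A`, so the losses win; on the near faces the only terms left are gains.
Sterile males only shrink the female gain, through the factor `M / (M + M_T) ∈ [0, 1]`. -/

theorem wild_equilibrium_adult_balance {φ γ μA1 μA2 μF r R Astar Fstar : ℝ}
    (hμA2 : μA2 ≠ 0) (hμF : μF ≠ 0) (hγμA1 : γ + μA1 ≠ 0)
    (hRdef : R = r * γ * φ / (μF * (γ + μA1)))
    (hAs : Astar = (γ + μA1) * (R - 1) / μA2) (hFs : Fstar = r * γ * Astar / μF) :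
    φ * Fstar = (γ + μA1 + μA2 * Astar) * Astar := by
  subst hRdef hAs hFs
  field_simp
  ring

theorem gain_sub_quadratic_loss_nonpos {φ c μ k F Astar Fstar : ℝ}
    (hφ : 0 ≤ φ) (hμ : 0 ≤ μ) (hk : 1 ≤ k) (hF : F ≤ k * Fstar)
    (hbal : φ * Fstar = (c + μ * Astar) * Astar) :
    φ * F - (c + μ * (k * Astar)) * (k * Astar) ≤ 0 := by
  have hexcess : 0 ≤ μ * Astar ^ 2 * (k * (k - 1)) :=
    mul_nonneg (by positivity) (mul_nonneg (by linarith) (by linarith))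
  refine sub_nonpos.mpr ?_
  calc φ * F ≤ φ * (k * Fstar) := mul_le_mul_of_nonneg_left hF hφ
    _ = k * ((c + μ * Astar) * Astar) := by linear_combination k * hbal
    _ ≤ (c + μ * (k * Astar)) * (k * Astar) := by linarith

theorem gain_sub_linear_loss_nonpos {a μ k x xstar ystar : ℝ}
    (ha : 0 ≤ a) (hx : x ≤ k * xstar) (hbal : a * xstar = μ * ystar) :
    a * x - μ * (k * ystar) ≤ 0 := by
  refine sub_nonpos.mpr ?_
  calc a * x ≤ a * (k * xstar) := mul_le_mul_of_nonneg_left hx ha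
    _ = μ * (k * ystar) := by linear_combination k * hbal

theorem stmt_9_general (φ γ μA1 μA2 μF μM r : ℝ)
    (hφ : 0 < φ) (hγ : 0 < γ) (hμA1 : 0 < μA1) (hμA2 : 0 < μA2)
    (hμF : 0 < μF) (hμM : 0 < μM) (hr0 : 0 < r) (hr1 : r < 1)
    (R : ℝ) (hRdef : R = r * γ * φ / (μF * (γ + μA1)))
    (k : ℝ) (hk : 1 ≤ k)
    (Astar Mstar Fstar : ℝ)
    (hAs : Astar = (γ + μA1) * (R - 1) / μA2)
    (hMs : Mstar = (1 - r) * γ * Astar / μM)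
    (hFs : Fstar = r * γ * Astar / μF)
    (MT : ℝ) (hMT : 0 ≤ MT)
    (A M F : ℝ)
    (hA : A ∈ Set.Icc 0 (k * Astar))
    (hM : M ∈ Set.Icc 0 (k * Mstar))
    (hF : F ∈ Set.Icc 0 (k * Fstar)) :
    (A = 0 → 0 ≤ φ * F - (γ + μA1 + μA2 * A) * A) ∧
    (M = 0 → 0 ≤ (1 - r) * γ * A - μM * M) ∧
    (F = 0 → 0 ≤ (M / (M + MT)) * r * γ * A - μF * F) ∧
    (A = k * Astar → φ * F - (γ + μA1 + μA2 * A) * A ≤ 0) ∧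
    (M = k * Mstar → (1 - r) * γ * A - μM * M ≤ 0) ∧
    (F = k * Fstar → (M / (M + MT)) * r * γ * A - μF * F ≤ 0) := by
  obtain ⟨hA0, hAk⟩ := hA
  obtain ⟨hM0, hMk⟩ := hM
  obtain ⟨hF0, hFk⟩ := hF
  have hq0 : 0 ≤ M / (M + MT) := div_nonneg hM0 (by linarith)
  have hq1 : M / (M + MT) ≤ 1 := div_le_one_of_le₀ (by linarith) (by linarith)
  have hmale_gain : 0 ≤ (1 - r) * γ := mul_nonneg (by linarith) hγ.le
  have hfemale_gain : 0 ≤ M / (M + MT) * r * γ * A := by positivity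
  have hMbal : (1 - r) * γ * Astar = μM * Mstar := by rw [hMs]; field_simp
  have hFbal : r * γ * Astar = μF * Fstar := by rw [hFs]; field_simp
  refine ⟨?_, ?_, ?_, ?_, ?_, ?_⟩
  · rintro rfl
    nlinarith
  · rintro rfl
    nlinarith
  · rintro rfl
    linarith
  · rintro rfl
    exact gain_sub_quadratic_loss_nonpos hφ.le hμA2.le hk hFk
      (wild_equilibrium_adult_balance hμA2.ne' hμF.ne' (by positivity) hRdef hAs hFs)
  · rintro rfl
    exact gain_sub_linear_loss_nonpos hmale_gain hAk hMbal
  · rintro rfl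
    have hsterile : M / (M + MT) * r * γ * A ≤ r * γ * A := by
      have : 0 ≤ r * γ * A := by positivity
      nlinarith
    linarith [gain_sub_linear_loss_nonpos (by positivity) hAk hFbal]

/-- (Content of Lemma 3.1, case `R > 1`.) On each face of the box
`Γ = [0,kA*]×[0,kM*]×[0,kF*]` (with `k ≥ 1`), the SIT vector field `H_{M_T}`
points inward. -/
theorem stmt_9 (φ γ μA1 μA2 μF μM r : ℝ)
    (hφ : 0 < φ) (hγ : 0 < γ) (hμA1 : 0 < μA1) (hμA2 : 0 < μA2)
    (hμF : 0 < μF) (hμM : 0 < μM) (hr0 : 0 < r) (hr1 : r < 1)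
    (R : ℝ) (hRdef : R = r * γ * φ / (μF * (γ + μA1))) (hR : 1 < R)
    (k : ℝ) (hk : 1 ≤ k)
    (Astar Mstar Fstar : ℝ)
    (hAs : Astar = (γ + μA1) * (R - 1) / μA2)
    (hMs : Mstar = (1 - r) * γ * Astar / μM)
    (hFs : Fstar = r * γ * Astar / μF)
    (MT : ℝ) (hMT : 0 ≤ MT)
    (A M F : ℝ)
    (hA : A ∈ Set.Icc 0 (k * Astar))
    (hM : M ∈ Set.Icc 0 (k * Mstar))
    (hF : F ∈ Set.Icc 0 (k * Fstar)) :
    (A = 0 → 0 ≤ φ * F - (γ + μA1 + μA2 * A) * A) ∧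
    (M = 0 → 0 ≤ (1 - r) * γ * A - μM * M) ∧
    (F = 0 → 0 ≤ (M / (M + MT)) * r * γ * A - μF * F) ∧
    (A = k * Astar → φ * F - (γ + μA1 + μA2 * A) * A ≤ 0) ∧
    (M = k * Mstar → (1 - r) * γ * A - μM * M ≤ 0) ∧
    (F = k * Fstar → (M / (M + MT)) * r * γ * A - μF * F ≤ 0) :=
  stmt_9_general φ γ μA1 μA2 μF μM r hφ hγ hμA1 hμA2 hμF hμM hr0 hr1 R hRdef k hk Astar Mstar Fstar
    hAs hMs hFs MT hMT A M F hA hM hF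
end

section
/- (Content of Lemma 3.1, case R ≤ 1.) Assume R ≤ 1, let k > 0, and let Γ = [0,k]×[0,(1−r)γk/μ_M]×[0,rγk/μ_F]. Then on each face of Γ the vector field H_0 points inward: for all (A,M,F) ∈ Γ, (i) if A = 0 then φF−(γ+μ_{A,1}+μ_{A,2}A)A ≥ 0; (ii) if M = 0 then (1−r)γA−μ_M M ≥ 0; (iii) if F = 0 then rγA−μ_F F ≥ 0; (iv) if A = k then φF−(γ+μ_{A,1}+μ_{A,2}A)A ≤ 0; (v) if M = (1−r)γk/μ_M then (1−r)γA−μ_M M ≤ 0; (vi) if F = rγk/μ_F then rγA−μ_F F ≤ 0. -/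
/-! The `M`- and `F`-equations are linear in `(A, M)` resp. `(A, F)`, and the upper faces of `Γ`
sit at the levels where the death term balances the largest possible recruitment from `A ≤ k`.
On the face `A = k` the egg input is at most `φ · rγk/μ_F = R (γ + μ_{A,1}) k`, which the linear
part of the larval loss already absorbs exactly when `R ≤ 1`. -/

open Set

theorem linear_compartment_inward_on_faces {c μ k A : ℝ} (hc : 0 ≤ c) (hμ : μ ≠ 0)
    (hA : A ∈ Icc 0 k) : 0 ≤ c * A - μ * 0 ∧ c * A - μ * (c * k / μ) ≤ 0 := by
  refine ⟨by simpa using mul_nonneg hc hA.1, ?_⟩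
  rw [mul_div_cancel₀ _ hμ]
  exact sub_nonpos.2 (mul_le_mul_of_nonneg_left hA.2 hc)

theorem larval_inflow_le_outflow {φ γ μA1 μA2 μF r k F : ℝ} (hφ : 0 ≤ φ) (hμA2 : 0 ≤ μA2)
    (hμF : 0 < μF) (hR : r * γ * φ ≤ μF * (γ + μA1)) (hk : 0 ≤ k) (hF : F ≤ r * γ * k / μF) :
    φ * F - (γ + μA1 + μA2 * k) * k ≤ 0 := by
  have hegg : φ * F ≤ (γ + μA1) * k :=
    calc φ * F ≤ φ * (r * γ * k / μF) := mul_le_mul_of_nonneg_left hF hφ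
      _ = r * γ * φ / μF * k := by ring
      _ ≤ (γ + μA1) * k := by
        gcongr
        rw [div_le_iff₀ hμF]
        linarith
  nlinarith [mul_nonneg (mul_nonneg hμA2 hk) hk]

theorem stmt_10_general (φ γ μA1 μA2 μF μM r : ℝ)
    (hφ : 0 < φ) (hγ : 0 < γ) (hμA1 : 0 < μA1) (hμA2 : 0 < μA2)
    (hμF : 0 < μF) (hμM : 0 < μM) (hr0 : 0 < r) (hr1 : r < 1)
    (hR : r * γ * φ / (μF * (γ + μA1)) ≤ 1)
    (k : ℝ)
    (A M F : ℝ)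
    (hA : A ∈ Set.Icc 0 k)
    (hF : F ∈ Set.Icc 0 (r * γ * k / μF)) :
    (A = 0 → 0 ≤ φ * F - (γ + μA1 + μA2 * A) * A) ∧
    (M = 0 → 0 ≤ (1 - r) * γ * A - μM * M) ∧
    (F = 0 → 0 ≤ r * γ * A - μF * F) ∧
    (A = k → φ * F - (γ + μA1 + μA2 * A) * A ≤ 0) ∧
    (M = (1 - r) * γ * k / μM → (1 - r) * γ * A - μM * M ≤ 0) ∧
    (F = r * γ * k / μF → r * γ * A - μF * F ≤ 0) := by
  have hR' : r * γ * φ ≤ μF * (γ + μA1) := (div_le_one (by positivity)).1 hR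
  obtain ⟨hM0, hMk⟩ :=
    linear_compartment_inward_on_faces (mul_nonneg (sub_nonneg.2 hr1.le) hγ.le) hμM.ne' hA
  obtain ⟨hF0, hFk⟩ :=
    linear_compartment_inward_on_faces (by positivity : 0 ≤ r * γ) hμF.ne' hA
  refine ⟨?_, fun h => h ▸ hM0, fun h => h ▸ hF0, ?_, fun h => h ▸ hMk, fun h => h ▸ hFk⟩
  · rintro rfl
    simpa using mul_nonneg hφ.le hF.1
  · rintro rfl
    exact larval_inflow_le_outflow hφ.le hμA2.le hμF hR' hA.1 hF.2

/-- (Content of Lemma 3.1, case `R ≤ 1`.) On each face of the box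
`Γ = [0,k]×[0,(1−r)γk/μ_M]×[0,rγk/μ_F]` (with `k > 0`), the vector field `H_0`
points inward. -/
theorem stmt_10 (φ γ μA1 μA2 μF μM r : ℝ)
    (hφ : 0 < φ) (hγ : 0 < γ) (hμA1 : 0 < μA1) (hμA2 : 0 < μA2)
    (hμF : 0 < μF) (hμM : 0 < μM) (hr0 : 0 < r) (hr1 : r < 1)
    (hR : r * γ * φ / (μF * (γ + μA1)) ≤ 1)
    (k : ℝ) (hk : 0 < k)
    (A M F : ℝ)
    (hA : A ∈ Set.Icc 0 k)
    (hM : M ∈ Set.Icc 0 ((1 - r) * γ * k / μM))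
    (hF : F ∈ Set.Icc 0 (r * γ * k / μF)) :
    (A = 0 → 0 ≤ φ * F - (γ + μA1 + μA2 * A) * A) ∧
    (M = 0 → 0 ≤ (1 - r) * γ * A - μM * M) ∧
    (F = 0 → 0 ≤ r * γ * A - μF * F) ∧
    (A = k → φ * F - (γ + μA1 + μA2 * A) * A ≤ 0) ∧
    (M = (1 - r) * γ * k / μM → (1 - r) * γ * A - μM * M ≤ 0) ∧
    (F = r * γ * k / μF → r * γ * A - μF * F ≤ 0) :=
  stmt_10_general φ γ μA1 μA2 μF μM r hφ hγ hμA1 hμA2 hμF hμM hr0 hr1 hR k A M F hA hF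
end

section
/- Assume R > 1, μ_F < μ_M, d_F ≥ d_M > 0, and μ > 0. Let σ_2 = (−(−μ²d_F+μ_F+μ_{A,1}+γ) + √Δ(μ))/2 with Δ(μ) = (−μ²d_F+μ_F+μ_{A,1}+γ)² + 4μ_F(μ_{A,1}+γ)(R−1) + 4(μ_{A,1}+γ)μ²d_F, and let σ_3 = −μ_M + μ²d_M. Then σ_2 > σ_3; in particular σ_2 exceeds both other eigenvalues σ_1 and σ_3 of the matrix ω(μ). -/
/-!
`σ₁ < σ₂` are the roots of `f σ = (σ + (μ_{A,1} + γ)) (σ + μ_F - μ² d_F) - R μ_F (μ_{A,1} + γ)`,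
the characteristic polynomial of the `(A, F)` block of `ω(μ)`. At the diagonal entry
`σ = μ² d_F - μ_F` of that block `f` equals `-R μ_F (μ_{A,1} + γ) < 0`, so this entry lies
strictly between `σ₁` and `σ₂`; and it exceeds `σ₃ = μ² d_M - μ_M` because `μ_F < μ_M` and
`d_M ≤ d_F`.
-/

theorem quadratic_roots_bracket {b c x : ℝ} (hx : x ^ 2 + b * x + c < 0) :
    (-b - Real.sqrt (b ^ 2 - 4 * c)) / 2 < x ∧ x < (-b + Real.sqrt (b ^ 2 - 4 * c)) / 2 := by
  have hsq : |2 * x + b| ^ 2 < b ^ 2 - 4 * c := by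
    rw [sq_abs]
    linarith
  have habs := abs_lt.mp (Real.lt_sqrt_of_sq_lt hsq)
  constructor <;> linarith [habs.1, habs.2]

theorem stmt_12_general (γ μA1 μF μM dF dM : ℝ)
    (hγ : 0 < γ) (hμA1 : 0 < μA1)
    (hμF : 0 < μF)
    (hFM : μF < μM) (hdFM : dM ≤ dF)
    (R : ℝ) (hR : 1 < R)
    (μ : ℝ)
    (Δ σ1 σ2 σ3 : ℝ)
    (hΔ : Δ = (-(μ ^ 2 * dF) + μF + μA1 + γ) ^ 2 + 4 * μF * (μA1 + γ) * (R - 1)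
      + 4 * (μA1 + γ) * μ ^ 2 * dF)
    (hσ1 : σ1 = (-(-(μ ^ 2 * dF) + μF + μA1 + γ) - Real.sqrt Δ) / 2)
    (hσ2 : σ2 = (-(-(μ ^ 2 * dF) + μF + μA1 + γ) + Real.sqrt Δ) / 2)
    (hσ3 : σ3 = -μM + μ ^ 2 * dM) :
    σ3 < σ2 ∧ σ1 < σ2 := by
  set b := -(μ ^ 2 * dF) + μF + μA1 + γ
  set c := μF * (μA1 + γ) * (1 - R) - (μA1 + γ) * μ ^ 2 * dF
  set x₀ := μ ^ 2 * dF - μF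
  have hΔ_eq : Δ = b ^ 2 - 4 * c := by rw [hΔ]; ring
  have hf_x₀ : x₀ ^ 2 + b * x₀ + c < 0 := by
    have hpos : 0 < R * μF * (μA1 + γ) := by positivity
    linarith [show x₀ ^ 2 + b * x₀ + c = -(R * μF * (μA1 + γ)) by ring]
  have hσ3_x₀ : σ3 < x₀ := by
    have : μ ^ 2 * dM ≤ μ ^ 2 * dF := mul_le_mul_of_nonneg_left hdFM (sq_nonneg μ)
    rw [hσ3]
    linarith
  obtain ⟨hσ1_x₀, hx₀_σ2⟩ := quadratic_roots_bracket hf_x₀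
  rw [← hΔ_eq, ← hσ1] at hσ1_x₀
  rw [← hΔ_eq, ← hσ2] at hx₀_σ2
  exact ⟨hσ3_x₀.trans hx₀_σ2, hσ1_x₀.trans hx₀_σ2⟩

/-- If `R > 1`, `μ_F < μ_M`, `d_F ≥ d_M > 0` and `μ > 0`, then `σ₂ > σ₃`; in
particular `σ₂` exceeds both other eigenvalues `σ₁` and `σ₃` of the matrix `ω(μ)`. -/
theorem stmt_12 (φ γ μA1 μA2 μF μM r dF dM : ℝ)
    (hφ : 0 < φ) (hγ : 0 < γ) (hμA1 : 0 < μA1) (hμA2 : 0 < μA2)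
    (hμF : 0 < μF) (hμM : 0 < μM) (hr0 : 0 < r) (hr1 : r < 1)
    (hFM : μF < μM) (hdM : 0 < dM) (hdFM : dM ≤ dF)
    (R : ℝ) (hRdef : R = r * γ * φ / (μF * (γ + μA1))) (hR : 1 < R)
    (μ : ℝ) (hμ : 0 < μ)
    (Δ σ1 σ2 σ3 : ℝ)
    (hΔ : Δ = (-(μ ^ 2 * dF) + μF + μA1 + γ) ^ 2 + 4 * μF * (μA1 + γ) * (R - 1)
      + 4 * (μA1 + γ) * μ ^ 2 * dF)
    (hσ1 : σ1 = (-(-(μ ^ 2 * dF) + μF + μA1 + γ) - Real.sqrt Δ) / 2)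
    (hσ2 : σ2 = (-(-(μ ^ 2 * dF) + μF + μA1 + γ) + Real.sqrt Δ) / 2)
    (hσ3 : σ3 = -μM + μ ^ 2 * dM) :
    σ3 < σ2 ∧ σ1 < σ2 :=
  stmt_12_general γ μA1 μF μM dF dM hγ hμA1 hμF hFM hdFM R hR μ Δ σ1 σ2 σ3 hΔ hσ1 hσ2 hσ3
end

section
/- Assume R > 1, μ_F < μ_M, d_F ≥ d_M > 0, and μ > 0. Let σ_2 be the positive root of the quadratic σ² + σ(−μ²d_F+μ_F+μ_{A,1}+γ) + μ_F(μ_{A,1}+γ)(1−R) − (μ_{A,1}+γ)μ²d_F = 0 and σ_3 = −μ_M+μ²d_M. Then σ_2 + μ_M − μ²d_M > 0 and σ_2 + μ_F − μ²d_F > 0, the vector v_0 = (1, μ_M/(σ_2+μ_M−μ²d_M), μ_F/(σ_2+μ_F−μ²d_F)) has all components strictly positive, and v_0 is an eigenvector of ω(μ) for the eigenvalue σ_2, i.e. ω(μ)·v_0 = σ_2·v_0. -/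
/-!
Writing `a = μ_{A,1} + γ`, the quadratic defining `σ₂` factors as
`(σ₂ + a)(σ₂ + μ_F - μ²d_F) = R a μ_F`. Both `σ₂ + a` and the right side are positive, hence so is
`σ₂ + μ_F - μ²d_F`, and `μ_F < μ_M`, `d_M ≤ d_F` pass this on to `σ₂ + μ_M - μ²d_M`.
The factorisation is exactly the first row of `ω v₀ = σ₂ v₀`; the other two rows hold for every `σ₂`.
-/

open Matrix

theorem mulVec_eq_smul_of_mul_eq {a b m f s t σ : ℝ} (hm : σ + m - s ≠ 0) (hf : σ + f - t ≠ 0)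
    (hchar : (σ + a) * (σ + f - t) = b * f) :
    !![-a, 0, b; m, -m + s, 0; f, 0, -f + t] *ᵥ ![1, m / (σ + m - s), f / (σ + f - t)] =
      σ • ![1, m / (σ + m - s), f / (σ + f - t)] := by
  simp only [cons_mulVec, empty_mulVec, vec3_dotProduct', smul_vec3, smul_eq_mul,
    mul_one, zero_mul, add_zero]
  refine vec3_eq ?_ ?_ ?_
  · field_simp
    linear_combination -hchar
  · field_simp
    ring
  · field_simp
    ring

theorem stmt_14_general (γ μA1 μF μM dF dM : ℝ)
    (hγ : 0 < γ) (hμA1 : 0 < μA1)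
    (hμF : 0 < μF) (hμM : 0 < μM)
    (hFM : μF < μM) (hdFM : dM ≤ dF)
    (R : ℝ) (hR : 1 < R)
    (μ : ℝ)
    (σ2 : ℝ)
    (hσ2root : σ2 ^ 2 + σ2 * (-(μ ^ 2 * dF) + μF + μA1 + γ)
      + μF * (μA1 + γ) * (1 - R) - (μA1 + γ) * μ ^ 2 * dF = 0)
    (hσ2pos : 0 < σ2)
    (ω : Matrix (Fin 3) (Fin 3) ℝ)
    (hω : ω = !![-(μA1 + γ), 0, R * (μA1 + γ);
                 μM, -μM + μ ^ 2 * dM, 0;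
                 μF, 0, -μF + μ ^ 2 * dF])
    (v0 : Fin 3 → ℝ)
    (hv0 : v0 = ![1, μM / (σ2 + μM - μ ^ 2 * dM), μF / (σ2 + μF - μ ^ 2 * dF)]) :
    0 < σ2 + μM - μ ^ 2 * dM ∧
    0 < σ2 + μF - μ ^ 2 * dF ∧
    (∀ i : Fin 3, 0 < v0 i) ∧
    ω.mulVec v0 = σ2 • v0 := by
  have hchar : (σ2 + (μA1 + γ)) * (σ2 + μF - μ ^ 2 * dF) = R * (μA1 + γ) * μF := by
    linear_combination hσ2root
  have hR0 : 0 < R := by linarith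
  have hF : 0 < σ2 + μF - μ ^ 2 * dF :=
    pos_of_mul_pos_right (hchar ▸ (by positivity : 0 < R * (μA1 + γ) * μF)) (by positivity)
  have hM : 0 < σ2 + μM - μ ^ 2 * dM := by
    linarith [mul_nonneg (sq_nonneg μ) (sub_nonneg.2 hdFM)]
  refine ⟨hM, hF, ?_, ?_⟩
  · subst hv0
    intro i
    fin_cases i
    exacts [one_pos, div_pos hμM hM, div_pos hμF hF]
  · subst hω hv0
    exact mulVec_eq_smul_of_mul_eq hM.ne' hF.ne' hchar

/-- Under the stated assumptions, `σ₂+μ_M−μ²d_M > 0`, `σ₂+μ_F−μ²d_F > 0`, the vector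
`v₀ = (1, μ_M/(σ₂+μ_M−μ²d_M), μ_F/(σ₂+μ_F−μ²d_F))` is strictly positive and is an
eigenvector of `ω(μ)` for the eigenvalue `σ₂`. -/
theorem stmt_14 (φ γ μA1 μA2 μF μM r dF dM : ℝ)
    (hφ : 0 < φ) (hγ : 0 < γ) (hμA1 : 0 < μA1) (hμA2 : 0 < μA2)
    (hμF : 0 < μF) (hμM : 0 < μM) (hr0 : 0 < r) (hr1 : r < 1)
    (hFM : μF < μM) (hdM : 0 < dM) (hdFM : dM ≤ dF)
    (R : ℝ) (hRdef : R = r * γ * φ / (μF * (γ + μA1))) (hR : 1 < R)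
    (μ : ℝ) (hμ : 0 < μ)
    (σ2 σ3 : ℝ)
    (hσ2root : σ2 ^ 2 + σ2 * (-(μ ^ 2 * dF) + μF + μA1 + γ)
      + μF * (μA1 + γ) * (1 - R) - (μA1 + γ) * μ ^ 2 * dF = 0)
    (hσ2pos : 0 < σ2)
    (hσ3 : σ3 = -μM + μ ^ 2 * dM)
    (ω : Matrix (Fin 3) (Fin 3) ℝ)
    (hω : ω = !![-(μA1 + γ), 0, R * (μA1 + γ);
                 μM, -μM + μ ^ 2 * dM, 0;
                 μF, 0, -μF + μ ^ 2 * dF])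
    (v0 : Fin 3 → ℝ)
    (hv0 : v0 = ![1, μM / (σ2 + μM - μ ^ 2 * dM), μF / (σ2 + μF - μ ^ 2 * dF)]) :
    0 < σ2 + μM - μ ^ 2 * dM ∧
    0 < σ2 + μF - μ ^ 2 * dF ∧
    (∀ i : Fin 3, 0 < v0 i) ∧
    ω.mulVec v0 = σ2 • v0 :=
  stmt_14_general γ μA1 μF μM dF dM hγ hμA1 hμF hμM hFM hdFM R hR μ σ2 hσ2root hσ2pos ω hω v0 hv0
end

section
/- Assume R > 1 and d_F > 0. Define σ_2(μ) = (−(−μ²d_F+μ_F+μ_{A,1}+γ) + √Δ(μ))/2 with Δ(μ) = (−μ²d_F+μ_F+μ_{A,1}+γ)² + 4μ_F(μ_{A,1}+γ)(R−1) + 4(μ_{A,1}+γ)μ²d_F, and Φ(μ) = σ_2(μ)/μ for μ > 0. Then Φ(μ) → +∞ as μ → 0⁺, Φ(μ) → +∞ as μ → +∞, and there exists a unique μ̄ > 0 such that Φ(μ̄) = inf{Φ(μ) : μ > 0}; moreover this infimum is positive. -/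
/-!
With `a = μF + μA1 + γ`, `K = μF (μA1 + γ) (R - 1) > 0` and `L = μA1 + γ`, `σ₂(μ)` is the positive
root of `X² + (a - dF μ²) X - (K + L dF μ²)`. It is continuous with `σ₂(0) > 0` and
`σ₂(μ) ≥ dF μ² - a`, so `Φ = σ₂ / μ` blows up at both ends of `(0, ∞)` and attains its minimum.
For `κ > 0`, `Φ(μ) = κ` means that `μ` is a root of the cubic
`p(μ) = -κ dF μ³ + (κ² - L dF) μ² + a κ μ - K`, and `Φ(μ) < κ` means `p(μ) > 0`. Both the leading
and the constant coefficient of `p` are negative, which forces a cubic vanishing at two positive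
points to be positive at their midpoint; hence two minimizers would give a value below the minimum.
-/

open Filter Set Real Topology

noncomputable def posRoot (b c : ℝ) : ℝ :=
  (-b + √(b ^ 2 + 4 * c)) / 2

section posRoot

variable {b c x : ℝ}

lemma abs_le_sqrt_sq_add (hc : 0 ≤ c) : |b| ≤ √(b ^ 2 + 4 * c) := by
  rw [← sqrt_sq_eq_abs]
  exact sqrt_le_sqrt (by linarith)

lemma posRoot_pos (hc : 0 < c) : 0 < posRoot b c := by
  have h : |b| < √(b ^ 2 + 4 * c) := by
    rw [← sqrt_sq_eq_abs]
    exact sqrt_lt_sqrt (sq_nonneg b) (by linarith)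
  unfold posRoot
  linarith [le_abs_self b]

lemma neg_le_posRoot (hc : 0 ≤ c) : -b ≤ posRoot b c := by
  unfold posRoot
  linarith [abs_le_sqrt_sq_add (b := b) hc, neg_abs_le b]

lemma add_posRoot_nonneg (hc : 0 ≤ c) : 0 ≤ b + posRoot b c := by
  unfold posRoot
  linarith [abs_le_sqrt_sq_add (b := b) hc, neg_abs_le b]

lemma sq_add_mul_sub_eq (hc : 0 ≤ c) (x : ℝ) :
    x ^ 2 + b * x - c = (x - posRoot b c) * (x + b + posRoot b c) := by
  have h := sq_sqrt (show 0 ≤ b ^ 2 + 4 * c by positivity)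
  unfold posRoot
  linear_combination h / 4

lemma posRoot_eq_iff (hc : 0 ≤ c) (hx : 0 < x) : posRoot b c = x ↔ x ^ 2 + b * x = c := by
  have hpos : 0 < x + b + posRoot b c := by linarith [add_posRoot_nonneg (b := b) hc]
  rw [← sub_eq_zero (a := x ^ 2 + b * x), sq_add_mul_sub_eq hc, mul_eq_zero,
    or_iff_left hpos.ne', sub_eq_zero, eq_comm]

lemma posRoot_lt_iff (hc : 0 ≤ c) (hx : 0 < x) : posRoot b c < x ↔ c < x ^ 2 + b * x := by
  have hpos : 0 < x + b + posRoot b c := by linarith [add_posRoot_nonneg (b := b) hc]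
  rw [← sub_pos (a := x ^ 2 + b * x), sq_add_mul_sub_eq hc, mul_pos_iff_of_pos_right hpos,
    sub_pos]

end posRoot

lemma cubic_midpoint_pos {α β γ δ x y : ℝ} (hα : α < 0) (hδ : δ < 0) (hx : 0 < x) (hxy : x < y)
    (hx0 : α * x ^ 3 + β * x ^ 2 + γ * x + δ = 0)
    (hy0 : α * y ^ 3 + β * y ^ 2 + γ * y + δ = 0) :
    0 < α * ((x + y) / 2) ^ 3 + β * ((x + y) / 2) ^ 2 + γ * ((x + y) / 2) + δ := by
  have hy : 0 < y := hx.trans hxy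
  have hyx : y - x ≠ 0 := sub_ne_zero.mpr hxy.ne'
  -- with `p` the cubic, these are `(x p(y) - y p(x)) / (y - x)` and `(p(y) - p(x)) / (y - x)`
  have h₁ : α * x * y * (x + y) + β * x * y - δ = 0 := by
    refine (mul_eq_zero.mp ?_).resolve_left hyx
    linear_combination x * hy0 - y * hx0
  have h₂ : α * (x ^ 2 + x * y + y ^ 2) + β * (x + y) + γ = 0 := by
    refine (mul_eq_zero.mp ?_).resolve_left hyx
    linear_combination hy0 - hx0
  set m := (x + y) / 2
  have key : x * y * (α * m ^ 3 + β * m ^ 2 + γ * m + δ)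
      = (m - x) * (y - m) * (-(α * x * y * m) - δ) := by
    linear_combination (m ^ 2 - m * (x + y)) * h₁ + (m * x * y) * h₂
  have hmx : 0 < m - x := by simp only [m]; linarith
  have hym : 0 < y - m := by simp only [m]; linarith
  have hαm : α * x * y * m < 0 :=
    mul_neg_of_neg_of_pos (mul_neg_of_neg_of_pos (mul_neg_of_neg_of_pos hα hx) hy) (by positivity)
  have : 0 < (m - x) * (y - m) * (-(α * x * y * m) - δ) :=
    mul_pos (mul_pos hmx hym) (by linarith)
  exact pos_of_mul_pos_right (key ▸ this) (mul_pos hx hy).le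

lemma exists_isMinOn_Ioi_of_tendsto_atTop {f : ℝ → ℝ} (hf : ContinuousOn f (Ioi 0))
    (h₀ : Tendsto f (𝓝[>] 0) atTop) (h_top : Tendsto f atTop atTop) :
    ∃ x, 0 < x ∧ IsMinOn f (Ioi 0) x := by
  have hcont : Continuous (f ∘ exp) := hf.comp_continuous continuous_exp exp_pos
  have hlim : Tendsto (f ∘ exp) (cocompact ℝ) atTop := by
    rw [cocompact_eq_atBot_atTop, tendsto_sup]
    exact ⟨h₀.comp tendsto_exp_atBot_nhdsGT, h_top.comp tendsto_exp_atTop⟩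
  obtain ⟨s, hs⟩ := hcont.exists_forall_le hlim
  refine ⟨exp s, exp_pos s, fun x (hx : 0 < x) => ?_⟩
  simpa [exp_log hx] using hs (log x)

noncomputable def waveSpeed (a K L d μ : ℝ) : ℝ :=
  posRoot (a - d * μ ^ 2) (K + L * d * μ ^ 2) / μ

section waveSpeed

variable {a K L d : ℝ}

lemma continuousOn_waveSpeed : ContinuousOn (waveSpeed a K L d) (Ioi 0) := by
  unfold waveSpeed posRoot
  exact ContinuousOn.div (by fun_prop) continuousOn_id fun μ hμ => (mem_Ioi.mp hμ).ne'

lemma waveSpeed_pos (hK : 0 < K) (hL : 0 ≤ L) (hd : 0 ≤ d) {μ : ℝ} (hμ : 0 < μ) :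
    0 < waveSpeed a K L d μ :=
  div_pos (posRoot_pos (by positivity)) hμ

lemma tendsto_waveSpeed_nhdsGT_zero (hK : 0 < K) :
    Tendsto (waveSpeed a K L d) (𝓝[>] 0) atTop := by
  have hσ : Tendsto (fun μ => posRoot (a - d * μ ^ 2) (K + L * d * μ ^ 2)) (𝓝[>] 0)
      (𝓝 (posRoot a K)) := by
    refine tendsto_nhdsWithin_of_tendsto_nhds (Continuous.tendsto' ?_ _ _ (by simp))
    unfold posRoot
    fun_prop
  exact (hσ.pos_mul_atTop (posRoot_pos hK) tendsto_inv_nhdsGT_zero).congr fun μ => rfl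

lemma tendsto_waveSpeed_atTop (hK : 0 ≤ K) (hL : 0 ≤ L) (hd : 0 < d) :
    Tendsto (waveSpeed a K L d) atTop atTop := by
  have hlow : Tendsto (fun μ => d * μ + -(a / μ)) atTop atTop :=
    (tendsto_id.const_mul_atTop hd).atTop_add (tendsto_const_nhds.div_atTop tendsto_id).neg
  refine tendsto_atTop_mono' _ ?_ (by simpa using hlow)
  filter_upwards [eventually_gt_atTop 0] with μ hμ
  calc d * μ + -(a / μ) = -(a - d * μ ^ 2) / μ := by field_simp; ring
    _ ≤ waveSpeed a K L d μ := by
      unfold waveSpeed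
      gcongr
      exact neg_le_posRoot (by positivity)

lemma waveSpeed_eq_iff (hK : 0 ≤ K) (hL : 0 ≤ L) (hd : 0 ≤ d) {μ κ : ℝ} (hμ : 0 < μ)
    (hκ : 0 < κ) :
    waveSpeed a K L d μ = κ ↔ (κ * μ) ^ 2 + (a - d * μ ^ 2) * (κ * μ) = K + L * d * μ ^ 2 := by
  rw [waveSpeed, div_eq_iff hμ.ne', posRoot_eq_iff (by positivity) (by positivity)]

lemma waveSpeed_lt_iff (hK : 0 ≤ K) (hL : 0 ≤ L) (hd : 0 ≤ d) {μ κ : ℝ} (hμ : 0 < μ)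
    (hκ : 0 < κ) :
    waveSpeed a K L d μ < κ ↔ K + L * d * μ ^ 2 < (κ * μ) ^ 2 + (a - d * μ ^ 2) * (κ * μ) := by
  rw [waveSpeed, div_lt_iff₀ hμ, posRoot_lt_iff (by positivity) (by positivity)]

lemma eq_of_isMinOn_waveSpeed (hK : 0 < K) (hL : 0 ≤ L) (hd : 0 < d) {x y : ℝ} (hx : 0 < x)
    (hy : 0 < y) (hx_min : IsMinOn (waveSpeed a K L d) (Ioi 0) x)
    (hy_min : IsMinOn (waveSpeed a K L d) (Ioi 0) y) : x = y := by
  wlog hxy : x < y generalizing x y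
  · rcases (not_lt.mp hxy).lt_or_eq with h | h
    · exact (this hy hx hy_min hx_min h).symm
    · exact h.symm
  set κ := waveSpeed a K L d x
  have hκ : 0 < κ := waveSpeed_pos hK hL hd.le hx
  have hyκ : waveSpeed a K L d y = κ :=
    le_antisymm (isMinOn_iff.mp hy_min x hx) (isMinOn_iff.mp hx_min y hy)
  have hroot : ∀ μ, 0 < μ → waveSpeed a K L d μ = κ →
      -(κ * d) * μ ^ 3 + (κ ^ 2 - L * d) * μ ^ 2 + a * κ * μ + -K = 0 := fun μ hμ h => by
    linear_combination (waveSpeed_eq_iff hK.le hL hd.le hμ hκ).mp h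
  have hmid := cubic_midpoint_pos (neg_neg_of_pos (mul_pos hκ hd)) (neg_neg_of_pos hK) hx hxy
    (hroot x hx rfl) (hroot y hy hyκ)
  have hm : 0 < (x + y) / 2 := by positivity
  have hlt : waveSpeed a K L d ((x + y) / 2) < κ :=
    (waveSpeed_lt_iff hK.le hL hd.le hm hκ).mpr (by linear_combination hmid)
  exact absurd (isMinOn_iff.mp hx_min _ hm) hlt.not_ge

theorem existsUnique_isMinOn_waveSpeed (hK : 0 < K) (hL : 0 ≤ L) (hd : 0 < d) :
    ∃! μ, 0 < μ ∧ IsMinOn (waveSpeed a K L d) (Ioi 0) μ := by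
  obtain ⟨μ, hμ, hμ_min⟩ := exists_isMinOn_Ioi_of_tendsto_atTop continuousOn_waveSpeed
    (tendsto_waveSpeed_nhdsGT_zero hK) (tendsto_waveSpeed_atTop hK.le hL hd)
  exact ⟨μ, ⟨hμ, hμ_min⟩, fun ν ⟨hν, hν_min⟩ =>
    eq_of_isMinOn_waveSpeed hK hL hd hν hμ hν_min hμ_min⟩

end waveSpeed

theorem stmt_16_general (γ μA1 μF dF : ℝ)
    (hγ : 0 < γ) (hμA1 : 0 < μA1)
    (hμF : 0 < μF)
    (hdF : 0 < dF)
    (R : ℝ) (hR : 1 < R)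
    (Φ : ℝ → ℝ)
    (hΦ : ∀ μ : ℝ, Φ μ =
      ((-(-(μ ^ 2 * dF) + μF + μA1 + γ)
          + Real.sqrt ((-(μ ^ 2 * dF) + μF + μA1 + γ) ^ 2
            + 4 * μF * (μA1 + γ) * (R - 1) + 4 * (μA1 + γ) * μ ^ 2 * dF)) / 2) / μ) :
    Filter.Tendsto Φ (nhdsWithin 0 (Set.Ioi 0)) Filter.atTop ∧
    Filter.Tendsto Φ Filter.atTop Filter.atTop ∧
    (∃! μbar : ℝ, 0 < μbar ∧ (∀ μ : ℝ, 0 < μ → Φ μbar ≤ Φ μ) ∧ 0 < Φ μbar) := by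
  have hK : 0 < μF * (μA1 + γ) * (R - 1) := by
    have hR₁ : 0 < R - 1 := sub_pos.mpr hR
    positivity
  have hL : 0 ≤ μA1 + γ := by positivity
  obtain rfl : Φ = waveSpeed (μF + μA1 + γ) (μF * (μA1 + γ) * (R - 1)) (μA1 + γ) dF := by
    funext μ
    rw [hΦ, waveSpeed, posRoot]
    ring_nf
  obtain ⟨μbar, ⟨hμbar, hμbar_min⟩, huniq⟩ := existsUnique_isMinOn_waveSpeed hK hL hdF
  refine ⟨tendsto_waveSpeed_nhdsGT_zero hK, tendsto_waveSpeed_atTop hK.le hL hdF,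
    μbar, ⟨hμbar, isMinOn_iff.mp hμbar_min, waveSpeed_pos hK hL hdF.le hμbar⟩, ?_⟩
  rintro ν ⟨hν, hν_min, -⟩
  exact huniq ν ⟨hν, isMinOn_iff.mpr hν_min⟩

/-- The wave-speed function `Φ(μ) = σ₂(μ)/μ` tends to `+∞` as `μ → 0⁺` and as
`μ → +∞`, and attains its (positive) infimum over `(0,∞)` at a unique `μ̄ > 0`. -/
theorem stmt_16 (φ γ μA1 μA2 μF μM r dF : ℝ)
    (hφ : 0 < φ) (hγ : 0 < γ) (hμA1 : 0 < μA1) (hμA2 : 0 < μA2)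
    (hμF : 0 < μF) (hμM : 0 < μM) (hr0 : 0 < r) (hr1 : r < 1)
    (hdF : 0 < dF)
    (R : ℝ) (hRdef : R = r * γ * φ / (μF * (γ + μA1))) (hR : 1 < R)
    (Φ : ℝ → ℝ)
    (hΦ : ∀ μ : ℝ, Φ μ =
      ((-(-(μ ^ 2 * dF) + μF + μA1 + γ)
          + Real.sqrt ((-(μ ^ 2 * dF) + μF + μA1 + γ) ^ 2
            + 4 * μF * (μA1 + γ) * (R - 1) + 4 * (μA1 + γ) * μ ^ 2 * dF)) / 2) / μ) :
    Filter.Tendsto Φ (nhdsWithin 0 (Set.Ioi 0)) Filter.atTop ∧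
    Filter.Tendsto Φ Filter.atTop Filter.atTop ∧
    (∃! μbar : ℝ, 0 < μbar ∧ (∀ μ : ℝ, 0 < μ → Φ μbar ≤ Φ μ) ∧ 0 < Φ μbar) :=
  stmt_16_general γ μA1 μF dF hγ hμA1 hμF hdF R hR Φ hΦ
end
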